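/- arXiv:2406.02049 — 5 statements merged into one kernel-verified Lean document; each statement's English description precedes it below -/
import Mathlib

section
/- Let 𝒢 be a canonical DAG with a fixed topological order, l ∈ ℒ a latent node and j ∈ 𝒪 an observed node with de_o(j) = de_o(l). Let A ∈ ℝ^𝒢_A satisfy the scaling convention (so in particular [A]_{j,l} = 1), let B' = [B_o, B_l] = ψ(A), and let B̃' = [B̃_o, B̃_l] = B'·P_σ, where σ is the transposition exchanging the columns indexed by j and l. Then B̃_o is invertible (with determinant 1), and setting Ã_{𝒪,𝒪} = I − B̃_o⁻¹ and Ã_{𝒪,ℒ} = B̃_o⁻¹ B̃_l, one has: [Ã_{𝒪,𝒪}]_{i,k} = [A_{𝒪,𝒪}]_{i,k} for every pair of observed nodes (i, k) with i ∉ ch(l) or k ∉ pa(j) ∪ {j}; and [Ã_{𝒪,ℒ}]_{i,h} = [A_{𝒪,ℒ}]_{i,h} for every observed i ∉ ch(l) and every latent h. -/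
open MeasureTheory ProbabilityTheory Matrix
open scoped ENNReal

/-- A canonical DAG with `po` observed and `pl` latent nodes. Observed nodes are
ordered topologically by their index; latent nodes have no parents and at least
two (observed) children. `edgeO` contains pairs `(j, i)` for edges `j → i`
between observed nodes, `edgeL` contains pairs `(l, i)` for edges from the
latent node `l` to the observed node `i`. -/
structure CanonicalDAG (po pl : ℕ) : Type where
  edgeO : Finset (Fin po × Fin po)
  edgeL : Finset (Fin pl × Fin po)
  topo : ∀ e ∈ edgeO, e.1 < e.2
  two_children : ∀ l : Fin pl, ∃ i i' : Fin po, i ≠ i' ∧ (l, i) ∈ edgeL ∧ (l, i') ∈ edgeL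

/-- The node set: observed ⊕ latent. -/
abbrev CanonicalDAG.Node (po pl : ℕ) : Type := Fin po ⊕ Fin pl

namespace CanonicalDAG

variable {po pl : ℕ} (G : CanonicalDAG po pl)

/-- The edge relation on all nodes. -/
def edge (v w : Node po pl) : Prop :=
  match v, w with
  | Sum.inl j, Sum.inl i => (j, i) ∈ G.edgeO
  | Sum.inr l, Sum.inl i => (l, i) ∈ G.edgeL
  | _, Sum.inr _ => False

/-- The children of a node (always observed, in a canonical DAG). -/
def ch (v : Node po pl) : Set (Fin po) := {i | G.edge v (Sum.inl i)}

/-- The parents of an observed node, as a set of (possibly latent) nodes. -/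
def pa (j : Fin po) : Set (Node po pl) := {v | G.edge v (Sum.inl j)}

/-- The observed descendants `de_o(v) = (de(v) ∪ {v}) ∩ 𝒪` of a node. -/
def deo (v : Node po pl) : Set (Fin po) :=
  {i | Relation.TransGen G.edge v (Sum.inl i) ∨ v = Sum.inl i}

/-- The edge relation of `𝒢_{∖ j}`: all edges pointing into `j` are removed. -/
def edgeDrop (j : Fin po) (v w : Node po pl) : Prop :=
  G.edge v w ∧ w ≠ Sum.inl j

/-- The set `de(v) ∩ 𝒪` computed in the graph `𝒢_{∖ j}`. -/
def deoDrop (j : Fin po) (v : Node po pl) : Set (Fin po) :=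
  {i | Relation.TransGen (G.edgeDrop j) v (Sum.inl i)}

/-- The edge-index type of the graph (identifying `ℝ^𝒢_A` with `ℝ^{|E|}`). -/
abbrev Edge : Type := {e // e ∈ G.edgeO} ⊕ {e // e ∈ G.edgeL}

/-- The edge-coordinate parameter space, `ℝ^𝒢_A ≃ ℝ^{|E|}`. -/
abbrev Params : Type := G.Edge → ℝ

/-- The observed-observed block `A_{𝒪,𝒪}` of the structural matrix with the given
edge coordinates; `[A]_{i,j} ≠ 0` only if `j → i` is an edge. -/
def Aoo (x : G.Params) : Matrix (Fin po) (Fin po) ℝ :=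
  Matrix.of fun i j => if h : (j, i) ∈ G.edgeO then x (Sum.inl ⟨(j, i), h⟩) else 0

/-- The observed-latent block `A_{𝒪,ℒ}` of the structural matrix. -/
def Aol (x : G.Params) : Matrix (Fin po) (Fin pl) ℝ :=
  Matrix.of fun i l => if h : (l, i) ∈ G.edgeL then x (Sum.inr ⟨(l, i), h⟩) else 0

/-- `B_o = (I - A_{𝒪,𝒪})⁻¹`. -/
noncomputable def Bo (x : G.Params) : Matrix (Fin po) (Fin po) ℝ := (1 - G.Aoo x)⁻¹

/-- `B_l = (I - A_{𝒪,𝒪})⁻¹ A_{𝒪,ℒ}`. -/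
noncomputable def Bl (x : G.Params) : Matrix (Fin po) (Fin pl) ℝ := (1 - G.Aoo x)⁻¹ * G.Aol x

/-- The parametrization `ψ : ℝ^𝒢_A → ℝ^{p_o × p}`, `A ↦ B' = [B_o, B_l]`. -/
noncomputable def mix (x : G.Params) : Matrix (Fin po) (Node po pl) ℝ :=
  Matrix.fromCols (G.Bo x) (G.Bl x)

/-- The first child `c(l)` of a latent node in the fixed topological order. -/
noncomputable def firstChild (l : Fin pl) : Fin po :=
  ((G.edgeL.filter fun e => e.1 = l).image Prod.snd).min'
    (by
      obtain ⟨i, _, _, hi, _⟩ := G.two_children l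
      exact ⟨i, Finset.mem_image.mpr ⟨(l, i), Finset.mem_filter.mpr ⟨hi, rfl⟩, rfl⟩⟩)

/-- The scaling convention: `[A]_{c(l), l} = 1` for every latent node `l`. -/
def Scaled (x : G.Params) : Prop := ∀ l : Fin pl, G.Aol x (G.firstChild l) l = 1

end CanonicalDAG

/-- Membership in the class `𝒩𝒢^p` of noise vectors: jointly independent,
(measurable) components whose laws are non-Gaussian (hence also non-degenerate,
as degenerate Gaussians are included among Gaussian laws). -/
def IsNGNoise {po pl : ℕ} {Ω : Type} [MeasurableSpace Ω] (μ : Measure Ω)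
    (N : Ω → CanonicalDAG.Node po pl → ℝ) : Prop :=
  (∀ v, Measurable fun ω => N ω v) ∧
    iIndepFun (fun v ω => N ω v) μ ∧
    ∀ (v : CanonicalDAG.Node po pl) (m : ℝ) (s : NNReal),
      μ.map (fun ω => N ω v) ≠ gaussianReal m s

namespace CanonicalDAG

variable {po pl : ℕ} (G : CanonicalDAG po pl)

/-- Generic identifiability of a parameter `φ` of the mixing matrix WITHOUT knowledge of
the graph: outside a Lebesgue-null subset of `ℝ^𝒢_A` (in edge coordinates), any
alternative canonical DAG `𝒢'` (with the same observed nodes and number of latent nodes)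
and scaled mixing matrix in `ℝ^{𝒢'}` producing the same observational distribution from
some non-Gaussian independent noise yields the same value of `φ`. -/
def GenIdUnknown {α : Type} (φ : Matrix (Fin po) (Node po pl) ℝ → α) : Prop :=
  ∃ Z : Set G.Params, volume Z = 0 ∧
    ∀ x : G.Params, x ∉ Z → G.Scaled x →
    ∀ (Ω : Type) (_ : MeasurableSpace Ω) (μ : Measure Ω), IsProbabilityMeasure μ →
    ∀ N : Ω → Node po pl → ℝ, IsNGNoise μ N →
    ∀ (G' : CanonicalDAG po pl) (x' : G'.Params), G'.Scaled x' →
    ∀ (Ω' : Type) (_ : MeasurableSpace Ω') (μ' : Measure Ω'), IsProbabilityMeasure μ' →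
    ∀ N' : Ω' → Node po pl → ℝ, IsNGNoise μ' N' →
    μ'.map (fun ω => (G'.mix x').mulVec (N' ω)) = μ.map (fun ω => (G.mix x).mulVec (N ω)) →
    φ (G'.mix x') = φ (G.mix x)

/-- Generic identifiability of a parameter `φ` of the mixing matrix WITH knowledge of
the graph: as above, but the alternative mixing matrix is required to lie in `ℝ^𝒢` for
the same graph `𝒢`. -/
def GenIdKnown {α : Type} (φ : Matrix (Fin po) (Node po pl) ℝ → α) : Prop :=
  ∃ Z : Set G.Params, volume Z = 0 ∧
    ∀ x : G.Params, x ∉ Z → G.Scaled x →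
    ∀ (Ω : Type) (_ : MeasurableSpace Ω) (μ : Measure Ω), IsProbabilityMeasure μ →
    ∀ N : Ω → Node po pl → ℝ, IsNGNoise μ N →
    ∀ x' : G.Params, G.Scaled x' →
    ∀ (Ω' : Type) (_ : MeasurableSpace Ω') (μ' : Measure Ω'), IsProbabilityMeasure μ' →
    ∀ N' : Ω' → Node po pl → ℝ, IsNGNoise μ' N' →
    μ'.map (fun ω => (G.mix x').mulVec (N' ω)) = μ.map (fun ω => (G.mix x).mulVec (N ω)) →
    φ (G.mix x') = φ (G.mix x)

end CanonicalDAG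

section SwapAux

namespace CanonicalDAG

variable {po pl : ℕ} (G : CanonicalDAG po pl)

/-- Any node reachable from an observed node is observed with a larger index. -/
lemma transGen_obs_lt {i : Fin po} {w : Node po pl}
    (h : Relation.TransGen G.edge (Sum.inl i) w) :
    ∃ i' : Fin po, w = Sum.inl i' ∧ i < i' := by
  induction h with
  | @single b hb =>
      cases b with
      | inl i' => exact ⟨i', rfl, G.topo _ hb⟩
      | inr => exact hb.elim
  | @tail b c hb hbc ih =>
      obtain ⟨i', hb', hlt⟩ := ih
      subst hb'
      cases c with
      | inl i'' => exact ⟨i'', rfl, hlt.trans (G.topo _ hbc)⟩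
      | inr => exact hbc.elim

lemma reflTransGen_obs_le {i i' : Fin po}
    (h : Relation.ReflTransGen G.edge (Sum.inl i) (Sum.inl i')) : i ≤ i' := by
  rcases Relation.ReflTransGen.cases_head h with h | ⟨c, hc, hc'⟩
  · exact le_of_eq (by injection h)
  · obtain ⟨i'', hw, hlt⟩ := G.transGen_obs_lt (Relation.TransGen.head' hc hc')
    injection hw with hw
    exact (hw ▸ hlt).le

/-- If `de_o(j) = de_o(l)`, then `j` is a child of `l` and all children of `l`
are `≥ j`. -/
lemma child_facts {j : Fin po} {l : Fin pl}
    (hde : G.deo (Sum.inl j) = G.deo (Sum.inr l)) :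
    (l, j) ∈ G.edgeL ∧ ∀ i : Fin po, (l, i) ∈ G.edgeL → j ≤ i := by
  have hge : ∀ i : Fin po, (l, i) ∈ G.edgeL → j ≤ i := by
    intro i hi
    have hmem : i ∈ G.deo (Sum.inr l) := Or.inl (Relation.TransGen.single hi)
    rw [← hde] at hmem
    rcases hmem with h | h
    · obtain ⟨i', hw, hlt⟩ := G.transGen_obs_lt h
      injection hw with hw
      exact (hw ▸ hlt).le
    · exact le_of_eq (by injection h)
  refine ⟨?_, hge⟩
  have hj : j ∈ G.deo (Sum.inl j) := Or.inr rfl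
  rw [hde] at hj
  rcases hj with h | h
  · rcases (Relation.TransGen.head'_iff).1 h with ⟨c, hc, hc'⟩
    cases c with
    | inl i =>
        have hle : j ≤ i := hge i hc
        have hle' : i ≤ j := G.reflTransGen_obs_le hc'
        have : i = j := le_antisymm hle' hle
        exact this ▸ hc
    | inr => exact hc.elim
  · exact absurd h (by simp)

lemma firstChild_eq {j : Fin po} {l : Fin pl}
    (hde : G.deo (Sum.inl j) = G.deo (Sum.inr l)) : G.firstChild l = j := by
  obtain ⟨hj, hge⟩ := G.child_facts hde
  have hjmem : j ∈ (G.edgeL.filter fun e => e.1 = l).image Prod.snd :=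
    Finset.mem_image.mpr ⟨(l, j), Finset.mem_filter.mpr ⟨hj, rfl⟩, rfl⟩
  refine le_antisymm (Finset.min'_le _ _ hjmem) ?_
  apply Finset.le_min'
  intro y hy
  obtain ⟨e, he, hey⟩ := Finset.mem_image.mp hy
  obtain ⟨he1, he2⟩ := Finset.mem_filter.mp he
  have : (l, y) ∈ G.edgeL := by
    have : e = (l, y) := by
      obtain ⟨e1, e2⟩ := e
      simp only at he2 hey
      rw [he2, hey]
    exact this ▸ he1
  exact hge y this

end CanonicalDAG

end SwapAux

/-- Lemma: effect of swapping the columns of `j` and `l` on the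
structural coefficients. Suppose `de_o(j) = de_o(l)`, let `A` satisfy the scaling
convention, `B' = ψ(A)` and `B̃' = [B̃_o, B̃_l] = B'·P_σ` with `σ` the transposition of
the columns of `j` and `l`. Then `B̃_o` has determinant `1` (hence is invertible), and
with `Ã_{𝒪,𝒪} = I − B̃_o⁻¹`, `Ã_{𝒪,ℒ} = B̃_o⁻¹ B̃_l`:
`[Ã_{𝒪,𝒪}]_{i,k} = [A_{𝒪,𝒪}]_{i,k}` whenever `i ∉ ch(l)` or `k ∉ pa(j) ∪ {j}`, and
`[Ã_{𝒪,ℒ}]_{i,h} = [A_{𝒪,ℒ}]_{i,h}` whenever `i ∉ ch(l)`. -/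
theorem swap_structural_coefficients {po pl : ℕ} (G : CanonicalDAG po pl)
    (j : Fin po) (l : Fin pl)
    (hde : G.deo (Sum.inl j) = G.deo (Sum.inr l))
    (x : G.Params) (hx : G.Scaled x) :
    let Bt : Matrix (Fin po) (CanonicalDAG.Node po pl) ℝ :=
      G.mix x *
        (Equiv.swap (Sum.inl j : CanonicalDAG.Node po pl) (Sum.inr l)).permMatrix ℝ
    let Bto : Matrix (Fin po) (Fin po) ℝ := Matrix.of fun a b => Bt a (Sum.inl b)
    let Btl : Matrix (Fin po) (Fin pl) ℝ := Matrix.of fun a h => Bt a (Sum.inr h)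
    Bto.det = 1 ∧
      (∀ i k : Fin po,
        (i ∉ G.ch (Sum.inr l) ∨ ¬(Sum.inl k ∈ G.pa j ∨ k = j)) →
          ((1 : Matrix (Fin po) (Fin po) ℝ) - Bto⁻¹) i k = G.Aoo x i k) ∧
      ∀ (i : Fin po) (h : Fin pl),
        i ∉ G.ch (Sum.inr l) → (Bto⁻¹ * Btl) i h = G.Aol x i h := by
  intro Bt Bto Btl
  classical
  obtain ⟨hjc, hge⟩ := G.child_facts hde
  have hAjl : G.Aol x j l = 1 := by
    have := hx l
    rwa [G.firstChild_eq hde] at this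
  -- basic vanishing facts
  have hAooz : ∀ i k : Fin po, ¬ k < i → G.Aoo x i k = 0 := by
    intro i k hk
    by_cases hm : (k, i) ∈ G.edgeO
    · exact absurd (G.topo _ hm) hk
    · simp [CanonicalDAG.Aoo, hm]
  have hAolz : ∀ (i : Fin po) (h' : Fin pl), (h', i) ∉ G.edgeL → G.Aol x i h' = 0 := by
    intro i h' hm
    simp [CanonicalDAG.Aol, hm]
  -- the matrix N = I - A_oo
  set N : Matrix (Fin po) (Fin po) ℝ := 1 - G.Aoo x with hNdef
  have hNtri : N.BlockTriangular OrderDual.toDual := by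
    intro i k hik
    have hik' : (i : Fin po) < k := hik
    have h1 : (1 : Matrix (Fin po) (Fin po) ℝ) i k = 0 :=
      Matrix.one_apply_ne (ne_of_lt hik')
    simp [hNdef, Matrix.sub_apply, h1, hAooz i k (not_lt.mpr hik'.le)]
  have hdetN : N.det = 1 := by
    rw [Matrix.det_of_lowerTriangular _ hNtri]
    refine Finset.prod_eq_one fun i _ => ?_
    simp [hNdef, Matrix.sub_apply, Matrix.one_apply, hAooz i i (lt_irrefl i)]
  have hNunit : IsUnit N.det := by rw [hdetN]; exact isUnit_one
  have hNl : N⁻¹ * N = 1 := Matrix.nonsing_inv_mul N hNunit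
  have hNr : N * N⁻¹ = 1 := Matrix.mul_nonsing_inv N hNunit
  -- the rank-one update
  set u : Fin po → ℝ := fun i => G.Aol x i l - if i = j then 1 else 0 with hudef
  set v : Fin po → ℝ := fun k => if k = j then 1 else 0 with hvdef
  set V : Matrix (Fin po) (Fin po) ℝ := Matrix.vecMulVec u v with hVdef
  set M : Matrix (Fin po) (Fin po) ℝ := 1 + V with hMdef
  set M' : Matrix (Fin po) (Fin po) ℝ := 1 - V with hM'def
  have huj : u j = 0 := by simp [hudef, hAjl]
  have huz : ∀ i : Fin po, i ∉ G.ch (Sum.inr l) → u i = 0 := by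
    intro i hi
    have hne : i ≠ j := fun h => hi (h ▸ hjc)
    have hz : G.Aol x i l = 0 := hAolz i l hi
    simp [hudef, hz, hne]
  have hVV : V * V = 0 := by
    ext i k
    rw [Matrix.mul_apply]
    rw [Finset.sum_eq_single j]
    · simp [hVdef, Matrix.vecMulVec_apply, hvdef, huj]
    · intro t _ ht
      simp [hVdef, Matrix.vecMulVec_apply, hvdef, ht]
    · simp
  have hMM' : M * M' = 1 := by
    have hexp : M * M' = 1 - V * V := by
      rw [hMdef, hM'def]
      simp only [mul_sub, add_mul, one_mul, mul_one]
      abel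
    rw [hexp, hVV, sub_zero]
  -- M is unitriangular, so det M = 1
  have hMtri : M.BlockTriangular OrderDual.toDual := by
    intro i k hik
    have hik' : (i : Fin po) < k := hik
    have h1 : (1 : Matrix (Fin po) (Fin po) ℝ) i k = 0 :=
      Matrix.one_apply_ne (ne_of_lt hik')
    by_cases hk : k = j
    · have hij : i < j := hk ▸ hik'
      have hAz : G.Aol x i l = 0 := by
        by_cases hm : (l, i) ∈ G.edgeL
        · exact absurd (hge i hm) (not_le.mpr hij)
        · exact hAolz i l hm
      simp [hMdef, Matrix.add_apply, hVdef, Matrix.vecMulVec_apply, hudef, hvdef,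
        hk, hAz, ne_of_lt hij, ne_of_lt hik']
    · simp [hMdef, Matrix.add_apply, h1, hVdef, Matrix.vecMulVec_apply, hvdef, hk]
  have hdetM : M.det = 1 := by
    rw [Matrix.det_of_lowerTriangular _ hMtri]
    refine Finset.prod_eq_one fun i _ => ?_
    by_cases hi : i = j
    · simp [hMdef, Matrix.add_apply, Matrix.one_apply, hVdef, Matrix.vecMulVec_apply,
        hudef, hvdef, hi, hAjl]
    · simp [hMdef, Matrix.add_apply, Matrix.one_apply, hVdef, Matrix.vecMulVec_apply,
        hvdef, hi]
  -- explicit form of Bto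
  have hNinvM : ∀ a b : Fin po, (N⁻¹ * M) a b =
      if b = j then G.Bl x a l else G.Bo x a b := by
    intro a b
    rw [Matrix.mul_apply]
    by_cases hb : b = j
    · rw [if_pos hb, hb]
      have hM : ∀ t, M t j = G.Aol x t l := by
        intro t
        simp only [hMdef, Matrix.add_apply, hVdef, Matrix.vecMulVec_apply, hudef,
          hvdef, Matrix.one_apply, if_true, eq_self_iff_true, mul_one]
        ring
      simp only [hM]
      rw [← Matrix.mul_apply]
      rfl
    · have hM : ∀ t, M t b = (1 : Matrix (Fin po) (Fin po) ℝ) t b := by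
        intro t
        simp [hMdef, Matrix.add_apply, hVdef, Matrix.vecMulVec_apply, hvdef, hb]
      simp only [hM]
      rw [← Matrix.mul_apply, Matrix.mul_one, if_neg hb]
      rfl
  have hBto : Bto = N⁻¹ * M := by
    ext a b
    rw [hNinvM]
    show (G.mix x *
        (Equiv.swap (Sum.inl j : CanonicalDAG.Node po pl) (Sum.inr l)).permMatrix ℝ)
        a (Sum.inl b) = _
    rw [PEquiv.mul_toMatrix_toPEquiv, Matrix.submatrix_apply, Equiv.symm_swap]
    by_cases hb : b = j
    · rw [if_pos hb, hb, Equiv.swap_apply_left]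
      rfl
    · rw [Equiv.swap_apply_of_ne_of_ne (by simpa using hb) (by simp), if_neg hb]
      rfl
  -- explicit form of Btl
  set C : Matrix (Fin po) (Fin pl) ℝ :=
    Matrix.of (fun k h' => if h' = l then (if k = j then (1 : ℝ) else 0)
      else G.Aol x k h') with hCdef
  have hNinvC : ∀ (a : Fin po) (h' : Fin pl), (N⁻¹ * C) a h' =
      if h' = l then G.Bo x a j else G.Bl x a h' := by
    intro a h'
    rw [Matrix.mul_apply]
    by_cases hh : h' = l
    · rw [if_pos hh, hh]
      rw [Finset.sum_eq_single j]
      · simp only [hCdef, Matrix.of_apply, if_true, eq_self_iff_true, mul_one]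
        rfl
      · intro t _ ht
        simp [hCdef, ht]
      · simp
    · have hC : ∀ t, C t h' = G.Aol x t h' := by
        intro t; simp [hCdef, hh]
      simp only [hC]
      rw [← Matrix.mul_apply, if_neg hh]
      rfl
  have hBtl : Btl = N⁻¹ * C := by
    ext a h'
    rw [hNinvC]
    show (G.mix x *
        (Equiv.swap (Sum.inl j : CanonicalDAG.Node po pl) (Sum.inr l)).permMatrix ℝ)
        a (Sum.inr h') = _
    rw [PEquiv.mul_toMatrix_toPEquiv, Matrix.submatrix_apply, Equiv.symm_swap]
    by_cases hh : h' = l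
    · rw [if_pos hh, hh, Equiv.swap_apply_right]
      rfl
    · rw [Equiv.swap_apply_of_ne_of_ne (by simp) (by simpa using hh), if_neg hh]
      rfl
  -- the inverse of Bto
  have hBtoMN : Bto * (M' * N) = 1 := by
    rw [hBto, Matrix.mul_assoc, ← Matrix.mul_assoc M M' N, hMM', Matrix.one_mul, hNl]
  have hBtoInv : Bto⁻¹ = M' * N := Matrix.inv_eq_right_inv hBtoMN
  refine ⟨?_, ?_, ?_⟩
  · -- determinant
    rw [hBto, Matrix.det_mul, Matrix.det_nonsing_inv, hdetN, hdetM]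
    simp
  · -- observed-observed block
    intro i k hcond
    rw [hBtoInv]
    have hexp : (1 : Matrix (Fin po) (Fin po) ℝ) - M' * N = G.Aoo x + V * N := by
      rw [hM'def, hNdef]
      simp only [sub_mul, one_mul, mul_sub, mul_one]
      abel
    rw [hexp, Matrix.add_apply]
    have hVN : (V * N) i k = u i * N j k := by
      rw [Matrix.mul_apply]
      rw [Finset.sum_eq_single j]
      · simp [hVdef, Matrix.vecMulVec_apply, hvdef]
      · intro t _ ht
        simp [hVdef, Matrix.vecMulVec_apply, hvdef, ht]
      · simp
    rw [hVN]
    rcases hcond with hi | hk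
    · rw [huz i hi, zero_mul, add_zero]
    · push_neg at hk
      obtain ⟨hk1, hk2⟩ := hk
      have hAz : G.Aoo x j k = 0 := by
        by_cases hm : (k, j) ∈ G.edgeO
        · exact absurd hm hk1
        · simp [CanonicalDAG.Aoo, hm]
      have hNjk : N j k = 0 := by
        have h1 : (1 : Matrix (Fin po) (Fin po) ℝ) j k = 0 :=
          Matrix.one_apply_ne (Ne.symm hk2)
        simp [hNdef, Matrix.sub_apply, h1, hAz]
      rw [hNjk, mul_zero, add_zero]
  · -- observed-latent block
    intro i h' hi
    rw [hBtoInv, hBtl, Matrix.mul_assoc, ← Matrix.mul_assoc N N⁻¹ C, hNr,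
      Matrix.one_mul]
    have hexp : M' * C = C - V * C := by
      rw [hM'def, Matrix.sub_mul, Matrix.one_mul]
    rw [hexp, Matrix.sub_apply]
    have hVC : (V * C) i h' = u i * C j h' := by
      rw [Matrix.mul_apply]
      rw [Finset.sum_eq_single j]
      · simp [hVdef, Matrix.vecMulVec_apply, hvdef]
      · intro t _ ht
        simp [hVdef, Matrix.vecMulVec_apply, hvdef, ht]
      · simp
    rw [hVC, huz i hi, zero_mul, sub_zero]
    by_cases hh : h' = l
    · have hne : i ≠ j := fun h => hi (h ▸ hjc)
      have hz : G.Aol x i l = 0 := hAolz i l hi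
      simp [hCdef, hh, hne, hz]
    · simp [hCdef, hh]
end

section
/- Let R be a commutative ring, p a natural number, and A a p × p matrix over R that is strictly lower triangular ([A]_{i,k} = 0 unless k < i). Fix an index j, and let A⁽ʲ⁾ be the matrix obtained from A by replacing its j-th row with zeros. Then I − A and I − A⁽ʲ⁾ are invertible, and with B = (I − A)⁻¹ and B⁽ʲ⁾ = (I − A⁽ʲ⁾)⁻¹, for every index i and every index l ≠ j one has [B]_{i,l} = [B]_{i,j} · [B]_{j,l} + [B⁽ʲ⁾]_{i,l}. -/
section Aux

variable {R : Type*} [CommRing R] {p : ℕ}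

lemma slt_blockTriangular (A : Matrix (Fin p) (Fin p) R)
    (hA : ∀ i k : Fin p, ¬k < i → A i k = 0) :
    (1 - A).BlockTriangular OrderDual.toDual := by
  intro i k h
  have hik : (i : Fin p) < k := h
  simp [Matrix.sub_apply, Matrix.one_apply_ne (ne_of_lt hik),
    hA i k (not_lt.mpr hik.le)]

lemma slt_det_one (A : Matrix (Fin p) (Fin p) R)
    (hA : ∀ i k : Fin p, ¬k < i → A i k = 0) :
    (1 - A).det = 1 := by
  rw [Matrix.det_of_lowerTriangular _ (slt_blockTriangular A hA)]
  simp [Matrix.sub_apply, hA _ _ (lt_irrefl _)]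

end Aux

/-- path decomposition identity for strictly lower triangular matrices.
Let `A` be a `p × p` matrix over a commutative ring that is strictly lower triangular
(`[A]_{i,k} = 0` unless `k < i`), and let `A⁽ʲ⁾` be obtained from `A` by zeroing out its
`j`-th row. Then `I − A` and `I − A⁽ʲ⁾` are invertible, and with `B = (I − A)⁻¹`,
`B⁽ʲ⁾ = (I − A⁽ʲ⁾)⁻¹`, for all `i` and all `l ≠ j` one has
`[B]_{i,l} = [B]_{i,j} · [B]_{j,l} + [B⁽ʲ⁾]_{i,l}`. -/
theorem strictly_lower_triangular_path_decomposition {R : Type*} [CommRing R] {p : ℕ}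
    (A : Matrix (Fin p) (Fin p) R) (hA : ∀ i k : Fin p, ¬k < i → A i k = 0) (j : Fin p) :
    IsUnit (1 - A) ∧ IsUnit (1 - A.updateRow j 0) ∧
      ∀ (i l : Fin p), l ≠ j →
        (1 - A)⁻¹ i l =
          (1 - A)⁻¹ i j * (1 - A)⁻¹ j l + (1 - A.updateRow j 0)⁻¹ i l := by
  set A' := A.updateRow j 0 with hA'def
  have hA' : ∀ i k : Fin p, ¬k < i → A' i k = 0 := by
    intro i k h
    by_cases hij : i = j
    · subst hij; simp [hA'def]
    · rw [hA'def, Matrix.updateRow_ne hij]; exact hA i k h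
  have hdet : (1 - A).det = 1 := slt_det_one A hA
  have hdet' : (1 - A').det = 1 := slt_det_one A' hA'
  have hdetU : IsUnit (1 - A).det := by rw [hdet]; exact isUnit_one
  have hdetU' : IsUnit (1 - A').det := by rw [hdet']; exact isUnit_one
  refine ⟨(Matrix.isUnit_iff_isUnit_det _).mpr hdetU,
    (Matrix.isUnit_iff_isUnit_det _).mpr hdetU', ?_⟩
  set B := (1 - A)⁻¹ with hBdef
  set B' := (1 - A')⁻¹ with hB'def
  have h1 : (1 - A) * B = 1 := Matrix.mul_nonsing_inv _ hdetU
  have h2 : B * (1 - A) = 1 := Matrix.nonsing_inv_mul _ hdetU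
  have h1' : (1 - A') * B' = 1 := Matrix.mul_nonsing_inv _ hdetU'
  -- B is lower triangular
  haveI : Invertible (1 - A) := (1 - A).invertibleOfIsUnitDet hdetU
  have hBlow : ∀ t l : Fin p, t < l → B t l = 0 := by
    have := Matrix.blockTriangular_inv_of_blockTriangular (slt_blockTriangular A hA)
    intro t l h
    exact this (show OrderDual.toDual l < OrderDual.toDual t from h)
  -- row j of A' is zero, hence (1 - A') j t = δ
  have hArow : ∀ t : Fin p, A' j t = 0 := fun t => by simp [hA'def]
  -- B' j l = δ_{j l}
  have hB'row : ∀ l : Fin p, B' j l = (1 : Matrix (Fin p) (Fin p) R) j l := by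
    intro l
    have := congrArg (fun M => M j l) h1'
    simp only [Matrix.mul_apply, Matrix.sub_apply, hArow, sub_zero] at this
    rw [← this]
    rw [Finset.sum_eq_single j]
    · simp
    · intro t _ ht; rw [Matrix.one_apply_ne (Ne.symm ht), zero_mul]
    · simp
  -- B j j = 1
  have hBjj : B j j = 1 := by
    have := congrArg (fun M => M j j) h1
    simp only [Matrix.mul_apply, Matrix.sub_apply, sub_mul] at this
    rw [Finset.sum_sub_distrib] at this
    have hz : ∑ t, A j t * B t j = 0 := by
      apply Finset.sum_eq_zero
      intro t _
      rcases lt_or_ge t j with h | h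
      · rw [hBlow t j h, mul_zero]
      · rw [hA j t (not_lt.mpr h), zero_mul]
    rw [hz, sub_zero] at this
    rw [Finset.sum_eq_single j] at this
    · simpa using this
    · intro t _ ht; rw [Matrix.one_apply_ne (Ne.symm ht), zero_mul]
    · simp
  -- key matrix identity
  have hmat : B - B' = B * ((A - A') * B') := by
    calc B - B' = B * ((1 - A') * B') - (B * (1 - A)) * B' := by
          rw [h1', h2, Matrix.mul_one, Matrix.one_mul]
      _ = B * ((A - A') * B') := by noncomm_ring
  -- entrywise evaluation of the correction term
  have key : ∀ i l : Fin p, (B * ((A - A') * B')) i l = B i j * (A * B') j l := by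
    intro i l
    rw [Matrix.mul_apply]
    rw [Finset.sum_eq_single j]
    · congr 1
      rw [Matrix.mul_apply, Matrix.mul_apply]
      apply Finset.sum_congr rfl
      intro t _
      simp [hA'def, Matrix.sub_apply]
    · intro s _ hs
      have hz : ((A - A') * B') s l = 0 := by
        rw [Matrix.mul_apply]
        apply Finset.sum_eq_zero
        intro t _
        rw [Matrix.sub_apply, hA'def, Matrix.updateRow_ne hs, sub_self, zero_mul]
      rw [hz, mul_zero]
    · simp
  intro i l hl
  have hB'jl : B' j l = 0 := by rw [hB'row l, Matrix.one_apply_ne (Ne.symm hl)]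
  have hentry : ∀ i' : Fin p, B i' l - B' i' l = B i' j * (A * B') j l := by
    intro i'
    have := congrArg (fun M => M i' l) hmat
    simpa [Matrix.sub_apply, key i' l] using this
  have hC : (A * B') j l = B j l := by
    have := hentry j
    rw [hB'jl, sub_zero, hBjj, one_mul] at this
    exact this.symm
  have := hentry i
  rw [hC] at this
  linear_combination this
end

section
/- Let 𝒢 be a DAG on 𝒱 = {1,…,p} with edge set E, let A be the generic matrix of 𝒢 over R = ℝ[x_e : e ∈ E], and let B = (I − A)⁻¹. Then for all nodes l, j, i with l ≠ j, the polynomial [B]_{i,l} − [B]_{i,j}·[B]_{j,l} is nonzero in R if and only if there exists a directed path from l to i in 𝒢 (trivial if i = l) that does not pass through the node j. -/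
open MvPolynomial

/-- The generic matrix of a DAG on `Fin p` with edge set `E` (edges `(j, i)` meaning
`j → i`), over the polynomial ring `ℝ[x_e : e ∈ E]`: `[A]_{i,j} = x_{j→i}` if
`j → i ∈ E`, and `0` otherwise. -/
noncomputable def genMatrix {p : ℕ} (E : Finset (Fin p × Fin p)) :
    Matrix (Fin p) (Fin p) (MvPolynomial {e // e ∈ E} ℝ) :=
  Matrix.of fun i j => if h : (j, i) ∈ E then MvPolynomial.X ⟨(j, i), h⟩ else 0

/-- `IsPath E j i π` : the list of nodes `π` is a directed path from `j` to `i` in the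
graph with edge set `E` (consecutive nodes joined by edges); the trivial path from `j`
to itself is the singleton list `[j]`. -/
def IsPath {p : ℕ} (E : Finset (Fin p × Fin p)) (j i : Fin p) (π : List (Fin p)) : Prop :=
  π.head? = some j ∧ π.getLast? = some i ∧ π.Chain' fun a b => (a, b) ∈ E

/-- The path monomial `a^π`: the product of the edge variables along the list `π`
(so the trivial one-node path contributes `1`). -/
noncomputable def pathMonomial {p : ℕ} (E : Finset (Fin p × Fin p)) (π : List (Fin p)) :
    MvPolynomial {e // e ∈ E} ℝ :=
  ((π.zip π.tail).map fun e =>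
    if h : e ∈ E then (MvPolynomial.X ⟨e, h⟩ : MvPolynomial {e // e ∈ E} ℝ) else 0).prod

/-- Auxiliary: the generating function of directed paths from `l` avoiding `j`,
defined by recursion on the terminal node. -/
noncomputable def Fa {p : ℕ} (E : Finset (Fin p × Fin p)) (l j : Fin p) (i : Fin p) :
    MvPolynomial {e // e ∈ E} ℝ :=
  if i = j then 0 else
    (if i = l then 1 else 0) +
      ∑ k : Fin p, if h : (k, i) ∈ E ∧ k < i then
        MvPolynomial.X ⟨(k, i), h.1⟩ * Fa E l j k else 0
termination_by i.val
decreasing_by exact h.2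

namespace GenMatrixAux

variable {p : ℕ} {E : Finset (Fin p × Fin p)}

lemma gen_lt (htopo : ∀ e ∈ E, e.1 < e.2) {i k : Fin p} (h : ¬ k < i) :
    genMatrix E i k = 0 := by
  rw [genMatrix, Matrix.of_apply, dif_neg]
  intro hm
  exact h (htopo _ hm)

lemma det_one (htopo : ∀ e ∈ E, e.1 < e.2) : (1 - genMatrix E).det = 1 := by
  have hbt : (1 - genMatrix E).BlockTriangular OrderDual.toDual := by
    intro i k hik
    have hik' : i < k := hik
    simp [Matrix.sub_apply, Matrix.one_apply_ne (ne_of_lt hik'),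
      gen_lt htopo (by exact fun h => absurd (h.trans hik') (lt_irrefl _))]
  rw [Matrix.det_of_lowerTriangular _ hbt]
  have : ∀ i : Fin p, (1 - genMatrix E) i i = 1 := by
    intro i
    simp [Matrix.sub_apply, Matrix.one_apply_eq, gen_lt htopo (lt_irrefl i)]
  simp [this]

/-- The linear recursion satisfied by the entries of `(1 - A)⁻¹`. -/
lemma inv_apply (htopo : ∀ e ∈ E, e.1 < e.2) (i m : Fin p) :
    (1 - genMatrix E)⁻¹ i m = (if i = m then 1 else 0) +
      ∑ k : Fin p, (if h : (k, i) ∈ E ∧ k < i then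
        MvPolynomial.X ⟨(k, i), h.1⟩ * (1 - genMatrix E)⁻¹ k m else 0) := by
  have hu : IsUnit (1 - genMatrix E).det := by rw [det_one htopo]; exact isUnit_one
  have h1 : (1 - genMatrix E) * (1 - genMatrix E)⁻¹ = 1 := Matrix.mul_nonsing_inv _ hu
  have h2 := congrFun (congrFun h1 i) m
  rw [Matrix.mul_apply, Matrix.one_apply] at h2
  have h3 : ∀ k : Fin p, (1 - genMatrix E) i k * (1 - genMatrix E)⁻¹ k m =
      (if i = k then (1 - genMatrix E)⁻¹ k m else 0) -
      (if h : (k, i) ∈ E ∧ k < i then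
        MvPolynomial.X ⟨(k, i), h.1⟩ * (1 - genMatrix E)⁻¹ k m else 0) := by
    intro k
    rw [Matrix.sub_apply, Matrix.one_apply, sub_mul]
    congr 1
    · split <;> simp
    · rw [genMatrix, Matrix.of_apply]
      by_cases hm : (k, i) ∈ E
      · rw [dif_pos hm, dif_pos ⟨hm, htopo _ hm⟩]
      · rw [dif_neg hm, dif_neg (fun h => hm h.1), zero_mul]
  rw [Finset.sum_congr rfl (fun k _ => h3 k), Finset.sum_sub_distrib,
    Finset.sum_ite_eq Finset.univ i, if_pos (Finset.mem_univ i)] at h2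
  linear_combination h2

section
variable (inv_apply' : ∀ i m : Fin p, (1 - genMatrix E)⁻¹ i m = (if i = m then 1 else 0) +
      ∑ k : Fin p, (if h : (k, i) ∈ E ∧ k < i then
        MvPolynomial.X ⟨(k, i), h.1⟩ * (1 - genMatrix E)⁻¹ k m else 0))

include inv_apply'

lemma inv_eq_zero_of_lt :
    ∀ n, ∀ i m : Fin p, i.val < n → i < m → (1 - genMatrix E)⁻¹ i m = 0 := by
  intro n
  induction n with
  | zero => exact fun i m hi _ => absurd hi (Nat.not_lt_zero _)
  | succ n ih =>
    intro i m hi him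
    rw [inv_apply', if_neg (ne_of_lt him)]
    rw [Finset.sum_eq_zero, zero_add]
    intro k _
    split
    · next h => rw [ih k m (by omega) (h.2.trans him), mul_zero]
    · rfl

lemma inv_diag_one (j : Fin p) : (1 - genMatrix E)⁻¹ j j = 1 := by
  rw [inv_apply', if_pos rfl]
  rw [Finset.sum_eq_zero, add_zero]
  intro k _
  split
  · next h =>
    rw [inv_eq_zero_of_lt inv_apply' (k.val + 1) k j (Nat.lt_succ_self _) h.2, mul_zero]
  · rfl

/-- Key identity: `B i l = Fa l j i + B i j * B j l`. -/
lemma key (l j : Fin p) :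
    ∀ n, ∀ i : Fin p, i.val < n →
      (1 - genMatrix E)⁻¹ i l =
        Fa E l j i + (1 - genMatrix E)⁻¹ i j * (1 - genMatrix E)⁻¹ j l := by
  intro n
  induction n with
  | zero => exact fun i hi => absurd hi (Nat.not_lt_zero _)
  | succ n ih =>
    intro i hi
    by_cases hij : i = j
    · subst hij
      rw [Fa, if_pos rfl, inv_diag_one inv_apply', zero_add, one_mul]
    · have hsplit : ∀ k : Fin p,
          (if h : (k, i) ∈ E ∧ k < i then
            MvPolynomial.X ⟨(k, i), h.1⟩ * (1 - genMatrix E)⁻¹ k l else 0) =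
          (if h : (k, i) ∈ E ∧ k < i then
            MvPolynomial.X ⟨(k, i), h.1⟩ * Fa E l j k else 0) +
          (if h : (k, i) ∈ E ∧ k < i then
            MvPolynomial.X ⟨(k, i), h.1⟩ * (1 - genMatrix E)⁻¹ k j else 0) *
            (1 - genMatrix E)⁻¹ j l := by
        intro k
        split
        · next h =>
          rw [ih k (by omega)]
          ring
        · rw [zero_mul, add_zero]
      rw [inv_apply' i l, Finset.sum_congr rfl (fun k _ => hsplit k),
        Finset.sum_add_distrib, ← Finset.sum_mul]
      have hFi : Fa E l j i = (if i = l then 1 else 0) +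
          ∑ k : Fin p, (if h : (k, i) ∈ E ∧ k < i then
            MvPolynomial.X ⟨(k, i), h.1⟩ * Fa E l j k else 0) := by
        rw [Fa, if_neg hij]
      have hBij : (1 - genMatrix E)⁻¹ i j =
          ∑ k : Fin p, (if h : (k, i) ∈ E ∧ k < i then
            MvPolynomial.X ⟨(k, i), h.1⟩ * (1 - genMatrix E)⁻¹ k j else 0) := by
        rw [inv_apply' i j, if_neg hij, zero_add]
      rw [← hBij, hFi]
      ring

end

/-- All coefficients of `Fa` are nonnegative. -/
lemma Fa_coeff_nonneg (l j : Fin p) :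
    ∀ n, ∀ i : Fin p, i.val < n → ∀ d, 0 ≤ coeff d (Fa E l j i) := by
  intro n
  induction n with
  | zero => exact fun i hi => absurd hi (Nat.not_lt_zero _)
  | succ n ih =>
    intro i hi d
    rw [Fa]
    split
    · simp
    rw [coeff_add, coeff_sum]
    apply add_nonneg
    · split <;> simp [coeff_one] <;> split <;> norm_num
    · apply Finset.sum_nonneg
      intro k _
      split
      · next h =>
        rw [coeff_X_mul']
        split
        · exact ih k (by omega) _
        · rfl
      · simp

/-- A path from `l` avoiding `j` yields a positive coefficient of `Fa`. -/
lemma Fa_coeff_pos (htopo : ∀ e ∈ E, e.1 < e.2) (l j : Fin p) :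
    ∀ n, ∀ (π : List (Fin p)) (i : Fin p), π.length ≤ n → IsPath E l i π → j ∉ π →
      ∃ d, 0 < coeff d (Fa E l j i) := by
  intro n
  induction n with
  | zero =>
    intro π i hlen hπ _
    rw [Nat.le_zero, List.length_eq_zero_iff] at hlen
    subst hlen
    exact absurd hπ.1 (by simp)
  | succ n ih =>
    intro π i hlen hπ hj
    obtain ⟨hhead, hlast, hchain⟩ := hπ
    rcases π.eq_nil_or_concat with rfl | ⟨L, b, rfl⟩
    · exact absurd hhead (by simp)
    rw [List.concat_eq_append] at *
    have hb : i = b := by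
      rw [List.getLast?_concat] at hlast
      exact (Option.some_injective _ hlast).symm
    subst hb
    have hij : i ≠ j := fun h => hj (List.mem_append_right _ (by simp [h]))
    rcases List.eq_nil_or_concat L with rfl | ⟨L', k, rfl⟩
    · -- π = [i], so i = l; use d = 0
      have hil : i = l := by
        simp at hhead; exact hhead
      refine ⟨0, ?_⟩
      rw [Fa, if_neg hij, coeff_add, coeff_sum]
      have h1 : coeff 0 (if i = l then (1 : MvPolynomial {e // e ∈ E} ℝ) else 0) = 1 := by
        rw [if_pos hil]; simp
      have h2 : ∀ k ∈ Finset.univ, coeff (0 : {e // e ∈ E} →₀ ℕ)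
          (if h : (k, i) ∈ E ∧ k < i then
            MvPolynomial.X ⟨(k, i), h.1⟩ * Fa E l j k else 0) = 0 := by
        intro k _
        split
        · rw [coeff_X_mul']; simp
        · simp
      rw [h1, Finset.sum_eq_zero h2]
      norm_num
    · -- π = (L' ++ [k]) ++ [i]
      rw [List.concat_eq_append] at *
      set L := L' ++ [k] with hL
      have hLne : L ≠ [] := by simp [hL]
      have hlastL : L.getLast? = some k := by rw [hL, List.getLast?_concat]
      have hheadL : L.head? = some l := by
        rw [List.head?_append] at hhead
        rcases Option.or_eq_some_iff.mp hhead with h | ⟨h, _⟩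
        · exact h
        · exact absurd h (by simp [hL])
      have hchainL : L.Chain' (fun a b => (a, b) ∈ E) ∧ (k, i) ∈ E := by
        unfold List.Chain' at hchain
        rw [List.isChain_append] at hchain
        refine ⟨hchain.1, ?_⟩
        have := hchain.2.2 k (by rw [hlastL]; rfl) i rfl
        exact this
      have hjL : j ∉ L := fun h => hj (List.mem_append_left _ h)
      have hki : k < i := htopo _ hchainL.2
      obtain ⟨d, hd⟩ := ih L k (by simp at hlen; omega)
        ⟨hheadL, hlastL, hchainL.1⟩ hjL
      refine ⟨Finsupp.single ⟨(k, i), hchainL.2⟩ 1 + d, ?_⟩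
      rw [Fa, if_neg hij, coeff_add, coeff_sum]
      apply add_pos_of_nonneg_of_pos
      · split <;> simp [coeff_one] <;> split <;> norm_num
      · refine Finset.sum_pos' (fun k' _ => ?_) ⟨k, Finset.mem_univ k, ?_⟩
        · split
          · rw [coeff_X_mul']
            split
            · exact Fa_coeff_nonneg l j (k'.val + 1) k' (Nat.lt_succ_self _) _
            · rfl
          · simp
        · rw [dif_pos ⟨hchainL.2, hki⟩, coeff_X_mul]
          exact hd

/-- If `Fa` is nonzero then a path avoiding `j` exists. -/
lemma path_of_Fa_ne_zero {l j : Fin p} (hlj : l ≠ j) :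
    ∀ n, ∀ i : Fin p, i.val < n → Fa E l j i ≠ 0 →
      ∃ π : List (Fin p), IsPath E l i π ∧ j ∉ π := by
  intro n
  induction n with
  | zero => exact fun i hi => absurd hi (Nat.not_lt_zero _)
  | succ n ih =>
    intro i hi hF
    by_contra hno
    apply hF
    rw [Fa]
    by_cases hij : i = j
    · rw [if_pos hij]
    rw [if_neg hij]
    have hil : i ≠ l := by
      rintro rfl
      exact hno ⟨[i], ⟨rfl, rfl, List.isChain_singleton i⟩, by simpa using hlj.symm⟩
    rw [if_neg hil, zero_add]
    apply Finset.sum_eq_zero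
    intro k _
    split
    · next h =>
      have hFk : Fa E l j k = 0 := by
        by_contra hFk
        obtain ⟨π, ⟨hhead, hlast, hchain⟩, hjπ⟩ := ih k (by omega) hFk
        apply hno
        have hπne : π ≠ [] := by rintro rfl; simp at hhead
        refine ⟨π ++ [i], ⟨?_, ?_, ?_⟩, ?_⟩
        · rw [List.head?_append, hhead]; rfl
        · exact List.getLast?_concat
        · unfold List.Chain'
          rw [List.isChain_append]
          exact ⟨hchain, List.isChain_singleton i, fun x hx y hy => by
            rw [hlast] at hx
            cases hx
            cases hy
            exact h.1⟩
        · intro hm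
          rcases List.mem_append.mp hm with hm | hm
          · exact hjπ hm
          · simp at hm
            exact hij hm.symm
      rw [hFk, mul_zero]
    · rfl

end GenMatrixAux

/-- paths avoiding a node.
With `B = (I − A)⁻¹` for the generic matrix `A` of a topologically ordered DAG, for all
nodes `l ≠ j` and any node `i`, the polynomial `[B]_{i,l} − [B]_{i,j}·[B]_{j,l}` is
nonzero iff there exists a directed path from `l` to `i` (trivial if `i = l`) that does
not pass through `j`. -/
theorem genMatrix_inv_sub_through_ne_zero_iff {p : ℕ} (E : Finset (Fin p × Fin p))
    (htopo : ∀ e ∈ E, e.1 < e.2) (l j i : Fin p) (hlj : l ≠ j) :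
    (1 - genMatrix E)⁻¹ i l - (1 - genMatrix E)⁻¹ i j * (1 - genMatrix E)⁻¹ j l ≠ 0 ↔
      ∃ π : List (Fin p), IsPath E l i π ∧ j ∉ π := by
  have hkey := GenMatrixAux.key (GenMatrixAux.inv_apply htopo) l j (i.val + 1) i
    (Nat.lt_succ_self _)
  have hdiff : (1 - genMatrix E)⁻¹ i l -
      (1 - genMatrix E)⁻¹ i j * (1 - genMatrix E)⁻¹ j l = Fa E l j i := by
    rw [hkey]; ring
  rw [hdiff]
  constructor
  · exact GenMatrixAux.path_of_Fa_ne_zero hlj (i.val + 1) i (Nat.lt_succ_self _)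
  · rintro ⟨π, hπ, hj⟩
    obtain ⟨d, hd⟩ := GenMatrixAux.Fa_coeff_pos htopo l j π.length π i le_rfl hπ hj
    intro h0
    rw [h0] at hd
    simp at hd
end

section
/- (Gessel–Viennot–Lindström vanishing criterion for the generic DAG matrix.) Let 𝒢 be a DAG on 𝒱 = {1,…,p} with edge set E, let A be the generic matrix of 𝒢 over R = ℝ[x_e : e ∈ E], and let I, J ⊆ 𝒱 be subsets of equal size. Then the determinant of the submatrix of (I − A)⁻¹ with rows indexed by I and columns indexed by J is nonzero in R if and only if there exist a bijection τ : J → I and, for each j ∈ J, a directed path π_j from j to τ(j) in 𝒢 (trivial when τ(j) = j) such that the vertex sets of the paths π_j are pairwise disjoint. -/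
open MvPolynomial

namespace LGVAux
open List

variable {α : Type*}

lemma takeWhile_append_cons [DecidableEq α] (s t : List α) (x : α) (hs : ∀ y ∈ s, y ≠ x) :
    (s ++ x :: t).takeWhile (fun z => decide (z ≠ x)) = s ∧
      (s ++ x :: t).dropWhile (fun z => decide (z ≠ x)) = x :: t := by
  induction s with
  | nil => simp [List.takeWhile, List.dropWhile]
  | cons y s ih =>
    have hy : y ≠ x := hs y (by simp)
    have h2 := ih (fun z hz => hs z (by simp [hz]))
    simp only [List.cons_append]
    rw [List.takeWhile_cons_of_pos (by simp [hy]), List.dropWhile_cons_of_pos (by simp [hy])]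
    exact ⟨by rw [h2.1], h2.2⟩

lemma sorted_head_le {y : α} {t : List α} [Preorder α]
    (h : List.Pairwise (· < ·) (y :: t)) {z : α} (hz : z ∈ y :: t) : y ≤ z := by
  rcases List.mem_cons.mp hz with rfl | hz'
  · exact le_refl _
  · exact le_of_lt (List.rel_of_pairwise_cons h hz')

lemma mem_zip_tail {l : List α} {a b : α} :
    (a, b) ∈ l.zip l.tail ↔ ∃ u w, l = u ++ a :: b :: w := by
  constructor
  · intro h
    induction l with
    | nil => simp at h
    | cons x rest ih =>
      match rest, h with
      | y :: t, h =>
        simp only [List.zip_cons_cons, List.tail_cons, List.mem_cons] at h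
        rcases h with h | h
        · simp only [Prod.mk.injEq] at h
          obtain ⟨rfl, rfl⟩ := h
          exact ⟨[], t, rfl⟩
        · obtain ⟨u, w, huw⟩ := ih (by simpa using h)
          exact ⟨x :: u, w, by simp [huw]⟩
  · rintro ⟨u, w, rfl⟩
    induction u with
    | nil => simp
    | cons x u ih =>
      rcases u with _ | ⟨y, u⟩
      · simp
      · simp only [List.cons_append, List.zip_cons_cons, List.tail_cons, List.mem_cons] at ih ⊢
        tauto

lemma chain'_iff_zip {R : α → α → Prop} {l : List α} :
    l.Chain' R ↔ ∀ z ∈ l.zip l.tail, R z.1 z.2 := by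
  induction l with
  | nil => simp [List.Chain']
  | cons x rest ih =>
    match rest with
    | [] => simp [List.Chain']
    | y :: t =>
      simp only [List.Chain'] at ih ⊢
      rw [List.isChain_cons_cons, ih]
      simp only [List.zip_cons_cons, List.tail_cons, List.mem_cons]
      constructor
      · rintro ⟨h1, h2⟩ z (rfl | hz); exact h1; exact h2 z hz
      · intro h; exact ⟨h (x, y) (Or.inl rfl), fun z hz => h z (Or.inr hz)⟩

lemma prefix_eq_of_getLast_mem {l₁ l₂ : List α} (h : l₁ <+: l₂) (hn : l₂.Nodup) {x : α}
    (hx : l₂.getLast? = some x) (hm : x ∈ l₁) : l₁ = l₂ := by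
  obtain ⟨r, rfl⟩ := h
  rcases r.eq_nil_or_concat with rfl | ⟨r', y, rfl⟩
  · simp
  · exfalso
    rw [List.concat_eq_append] at hx hn
    have hx' : y = x := by
      rw [show l₁ ++ (r' ++ [y]) = (l₁ ++ r') ++ [y] by simp] at hx
      simpa [List.getLast?_append] using hx
    have hd := List.disjoint_of_nodup_append hn
    exact hd hm (by simp [hx'])


lemma nodup_append_cons_eq {s t u w : List α} {x : α}
    (h : s ++ x :: t = u ++ x :: w) (hn : (s ++ x :: t).Nodup) : s = u ∧ t = w := by
  classical
  have hxs : ∀ y ∈ s, y ≠ x := by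
    intro y hy hyx
    exact List.disjoint_of_nodup_append hn hy (by simp [hyx])
  have hxu : ∀ y ∈ u, y ≠ x := by
    intro y hy hyx
    have hn' : (u ++ x :: w).Nodup := h ▸ hn
    exact List.disjoint_of_nodup_append hn' hy (by simp [hyx])
  have h1 := takeWhile_append_cons s t x hxs
  have h2 := takeWhile_append_cons u w x hxu
  have hs : s = u := by rw [← h1.1, ← h2.1, h]
  refine ⟨hs, ?_⟩
  subst hs
  have h3 := List.append_cancel_left h
  exact (List.cons_injective.eq_iff.mp h3)


variable {p : ℕ} (E : Finset (Fin p × Fin p))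

noncomputable def edgeX (e : Fin p × Fin p) : MvPolynomial {e // e ∈ E} ℝ :=
  if h : e ∈ E then (MvPolynomial.X ⟨e, h⟩ : MvPolynomial {e // e ∈ E} ℝ) else 0

lemma pathMonomial_def (π : List (Fin p)) :
    pathMonomial E π = ((π.zip π.tail).map (edgeX E)).prod := rfl

lemma pathMonomial_singleton (x : Fin p) : pathMonomial E [x] = 1 := rfl

lemma pathMonomial_cons_cons (x y : Fin p) (t : List (Fin p)) :
    pathMonomial E (x :: y :: t) = edgeX E (x, y) * pathMonomial E (y :: t) := by
  simp [pathMonomial_def, edgeX]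

lemma pathMonomial_append (l₁ l₂ : List (Fin p)) (v : Fin p) :
    pathMonomial E (l₁ ++ v :: l₂) = pathMonomial E (l₁ ++ [v]) * pathMonomial E (v :: l₂) := by
  induction l₁ with
  | nil => simp [pathMonomial_singleton]
  | cons x l₁ ih =>
    rcases l₁ with _ | ⟨y, l₁⟩
    · simp [pathMonomial_cons_cons, pathMonomial_singleton, mul_assoc]
    · simp only [List.cons_append, pathMonomial_cons_cons] at ih ⊢
      rw [ih, mul_assoc]

variable {E}

section paths

variable (E) in
noncomputable def pathFinset (j i : Fin p) : Finset (List (Fin p)) :=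
  @Finset.filter _ (fun π => IsPath E j i π) (Classical.decPred _)
    (Finset.univ.image fun s : Finset (Fin p) => s.sort (· ≤ ·))

lemma isPath_head_cons {j i : Fin p} {π : List (Fin p)} (h : IsPath E j i π) :
    ∃ t, π = j :: t := by
  cases π with
  | nil => simp [IsPath] at h
  | cons a t =>
    have h' : a = j := by simpa using h.1
    exact ⟨t, by rw [h']⟩

lemma isPath_cons {j k i : Fin p} {ρ : List (Fin p)} (hjk : (j, k) ∈ E)
    (h : IsPath E k i ρ) : IsPath E j i (j :: ρ) := by
  obtain ⟨t, rfl⟩ := isPath_head_cons h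
  refine ⟨rfl, ?_, List.isChain_cons_cons.mpr ⟨hjk, h.2.2⟩⟩
  rw [List.getLast?_cons_cons]
  exact h.2.1

lemma isPath_cons_decomp {j i : Fin p} (hne : j ≠ i) {π : List (Fin p)}
    (h : IsPath E j i π) :
    ∃ k t, π = j :: k :: t ∧ (j, k) ∈ E ∧ IsPath E k i (k :: t) := by
  obtain ⟨t0, rfl⟩ := isPath_head_cons h
  cases t0 with
  | nil => exact absurd (by simpa using h.2.1) hne
  | cons k t =>
    have hc := List.isChain_cons_cons.mp h.2.2
    refine ⟨k, t, rfl, hc.1, rfl, ?_, hc.2⟩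
    rw [← List.getLast?_cons_cons (a := j)]
    exact h.2.1

variable (htopo : ∀ e ∈ E, e.1 < e.2)
include htopo

lemma isPath_sorted {j i : Fin p} {π : List (Fin p)} (h : IsPath E j i π) :
    List.Pairwise (· < ·) π :=
  List.isChain_iff_pairwise.mp (List.IsChain.imp (fun ⦃a b⦄ hab => htopo (a, b) hab) h.2.2)

lemma mem_pathFinset {j i : Fin p} {π : List (Fin p)} :
    π ∈ pathFinset E j i ↔ IsPath E j i π := by
  constructor
  · intro h
    exact ((@Finset.mem_filter _ _ (Classical.decPred _) _ _).mp h).2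
  · intro h
    refine (@Finset.mem_filter _ _ (Classical.decPred _) _ _).mpr ⟨?_, h⟩
    refine Finset.mem_image.mpr ⟨π.toFinset, Finset.mem_univ _, ?_⟩
    have hs := isPath_sorted htopo h
    exact (List.toFinset_sort _ hs.nodup).mpr (hs.imp fun {a b} hab => le_of_lt hab)

lemma isPath_le {j i : Fin p} {π : List (Fin p)} (h : IsPath E j i π) : j ≤ i := by
  have hs := isPath_sorted htopo h
  obtain ⟨t, rfl⟩ := isPath_head_cons h
  have hi : i ∈ j :: t := by
    obtain ⟨hne, h2⟩ := List.mem_getLast?_eq_getLast (l := j :: t) (x := i) h.2.1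
    exact h2 ▸ List.getLast_mem hne
  exact sorted_head_le hs hi

lemma pathFinset_empty {j i : Fin p} (h : ¬ j ≤ i) : pathFinset E j i = ∅ := by
  rw [Finset.eq_empty_iff_forall_notMem]
  intro π hπ
  exact h (isPath_le htopo ((mem_pathFinset htopo).mp hπ))

lemma pathFinset_self (j : Fin p) : pathFinset E j j = {[j]} := by
  ext π
  rw [mem_pathFinset htopo, Finset.mem_singleton]
  constructor
  · intro h
    have hs := isPath_sorted htopo h
    obtain ⟨t, rfl⟩ := isPath_head_cons h
    cases t with
    | nil => rfl
    | cons y t =>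
      exfalso
      have hj : j < y := (List.pairwise_cons.mp hs).1 y (by simp)
      have hne : (y :: t) ≠ [] := by simp
      have hlast : (j :: y :: t).getLast? = some ((y :: t).getLast hne) := by
        rw [List.getLast?_eq_getLast_of_ne_nil (by simp : (j :: y :: t) ≠ [])]
        simp [List.getLast_cons hne]
      have h2 : (y :: t).getLast hne = j := by
        have := h.2.1
        rw [hlast] at this
        exact (Option.some.inj this)
      have hmem : j ∈ y :: t := h2 ▸ List.getLast_mem hne
      have : y ≤ j := sorted_head_le (List.pairwise_cons.mp hs).2 hmem
      exact absurd (lt_of_lt_of_le hj this) (lt_irrefl j)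
  · rintro rfl
    exact ⟨rfl, rfl, List.isChain_singleton _⟩

end paths

section matrixinv

variable (htopo : ∀ e ∈ E, e.1 < e.2)
include htopo

lemma sum_path_decomp (i j : Fin p) :
    ∑ π ∈ pathFinset E j i, pathMonomial E π =
      (if i = j then 1 else 0) +
        ∑ k : Fin p, (∑ ρ ∈ pathFinset E k i, pathMonomial E ρ) * edgeX E (j, k) := by
  by_cases hij : i = j
  · subst hij
    rw [if_pos rfl, pathFinset_self htopo]
    have hz : ∀ k : Fin p,
        (∑ ρ ∈ pathFinset E k i, pathMonomial E ρ) * edgeX E (i, k) = 0 := by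
      intro k
      by_cases hk : (i, k) ∈ E
      · have hik : i < k := htopo (i, k) hk
        rw [pathFinset_empty htopo (by exact not_le.mpr hik)]
        simp
      · simp [edgeX, hk]
    rw [Finset.sum_congr rfl fun k _ => hz k]
    simp [pathMonomial_singleton]
  · rw [if_neg hij]
    haveI : Inhabited (Fin p) := ⟨j⟩
    have hfil : ∀ k : Fin p,
        (∑ ρ ∈ pathFinset E k i, pathMonomial E ρ) * edgeX E (j, k) ≠ 0 → (j, k) ∈ E := by
      intro k h
      by_contra hk
      exact h (by simp [edgeX, hk])
    rw [← Finset.sum_filter_of_ne (fun k _ => hfil k), zero_add]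
    simp only [Finset.sum_mul]
    rw [← Finset.sum_sigma (Finset.univ.filter fun k => (j, k) ∈ E)
      (fun k => pathFinset E k i) (fun x => pathMonomial E x.2 * edgeX E (j, x.1))]
    refine Finset.sum_bij' (i := fun π _ => ⟨π.tail.headI, π.tail⟩)
      (j := fun x _ => j :: x.2) ?_ ?_ ?_ ?_ ?_
    · intro π hπ
      obtain ⟨k, t, rfl, hjk, hkt⟩ :=
        isPath_cons_decomp (fun h => hij h.symm) ((mem_pathFinset htopo).mp hπ)
      simp only [List.tail_cons, List.headI]
      exact Finset.mem_sigma.mpr ⟨Finset.mem_filter.mpr ⟨Finset.mem_univ _, hjk⟩,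
        (mem_pathFinset htopo).mpr hkt⟩
    · intro x hx
      obtain ⟨h1, h2⟩ := Finset.mem_sigma.mp hx
      exact (mem_pathFinset htopo).mpr
        (isPath_cons (Finset.mem_filter.mp h1).2 ((mem_pathFinset htopo).mp h2))
    · intro π hπ
      obtain ⟨k, t, rfl, hjk, hkt⟩ :=
        isPath_cons_decomp (fun h => hij h.symm) ((mem_pathFinset htopo).mp hπ)
      rfl
    · intro x hx
      obtain ⟨h1, h2⟩ := Finset.mem_sigma.mp hx
      obtain ⟨t, ht⟩ := isPath_head_cons ((mem_pathFinset htopo).mp h2)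
      cases x with
      | mk k ρ => simp only at ht ⊢; subst ht; rfl
    · intro π hπ
      obtain ⟨k, t, rfl, hjk, hkt⟩ :=
        isPath_cons_decomp (fun h => hij h.symm) ((mem_pathFinset htopo).mp hπ)
      simp only [List.tail_cons, List.headI]
      rw [pathMonomial_cons_cons, mul_comm]

variable (E) in
noncomputable def pathMatrix : Matrix (Fin p) (Fin p) (MvPolynomial {e // e ∈ E} ℝ) :=
  Matrix.of fun i j => ∑ π ∈ pathFinset E j i, pathMonomial E π

lemma pathMatrix_mul_eq_one : pathMatrix E * (1 - genMatrix E) = 1 := by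
  refine Matrix.ext fun i j => ?_
  rw [Matrix.mul_apply]
  have hA : ∀ k, genMatrix E k j = edgeX E (j, k) := fun k => rfl
  simp only [Matrix.sub_apply, Matrix.one_apply, hA, mul_sub, Finset.sum_sub_distrib,
    mul_ite, mul_one, mul_zero]
  rw [Finset.sum_ite_eq' Finset.univ j (fun k => pathMatrix E i k)]
  simp only [Finset.mem_univ, if_true]
  have := sum_path_decomp htopo i j
  show pathMatrix E i j - ∑ k, pathMatrix E i k * edgeX E (j, k) = _
  have hP : pathMatrix E i j = ∑ π ∈ pathFinset E j i, pathMonomial E π := rfl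
  have hPk : ∀ k, pathMatrix E i k = ∑ ρ ∈ pathFinset E k i, pathMonomial E ρ := fun k => rfl
  rw [hP, this]
  simp only [hPk]
  rw [add_sub_cancel_right]

lemma inv_eq_pathMatrix : (1 - genMatrix E)⁻¹ = pathMatrix E :=
  Matrix.inv_eq_left_inv (pathMatrix_mul_eq_one htopo)

end matrixinv

section backward

lemma isPath_getLast_mem {j i : Fin p} {π : List (Fin p)} (h : IsPath E j i π) : i ∈ π := by
  obtain ⟨hne, h2⟩ := List.mem_getLast?_eq_getLast (l := π) (x := i) h.2.1
  exact h2 ▸ List.getLast_mem hne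

lemma prod_indicator {γ : Type*} (l : List γ) (P : γ → Prop) [DecidablePred P] :
    (l.map fun z => if P z then (1 : ℝ) else 0).prod = if ∀ z ∈ l, P z then 1 else 0 := by
  induction l with
  | nil => simp
  | cons x l ih =>
    by_cases hx : P x
    · simp [hx, ih]
    · simp [hx]

noncomputable def sysEdges {J : Finset (Fin p)} (π : {x // x ∈ J} → List (Fin p)) :
    Finset (Fin p × Fin p) :=
  Finset.univ.biUnion fun b => ((π b).zip (π b).tail).toFinset

variable {J I : Finset (Fin p)} {τ : {x // x ∈ J} ≃ {x // x ∈ I}}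
  {π : {x // x ∈ J} → List (Fin p)}
variable (htopo : ∀ e ∈ E, e.1 < e.2)
  (hpath : ∀ a : {x // x ∈ J}, IsPath E ↑a ↑(τ a) (π a))
  (hdisj : ∀ a b, a ≠ b → ∀ v : Fin p, v ∈ π a → v ∉ π b)

include htopo hpath hdisj in
lemma chainS_prefix :
    ∀ (ρ : List (Fin p)) (x : Fin p) (d : {x // x ∈ J}) (s t : List (Fin p)),
      ρ.head? = some x → π d = s ++ x :: t →
      (ρ.Chain' fun a b => (a, b) ∈ sysEdges π) → ρ <+: x :: t := by
  intro ρ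
  induction ρ with
  | nil => intro x d s t hh; simp at hh
  | cons y ρ ih =>
    intro x d s t hh hsplit hch
    have hyx : y = x := by simpa using hh
    subst hyx
    cases ρ with
    | nil => exact ⟨t, rfl⟩
    | cons z r =>
      have hzS : (y, z) ∈ sysEdges π := (List.isChain_cons_cons.mp hch).1
      obtain ⟨d', _, hd'⟩ := Finset.mem_biUnion.mp hzS
      have hz2 := List.mem_toFinset.mp hd'
      obtain ⟨u, w, hw⟩ := mem_zip_tail.mp hz2
      have hxd' : y ∈ π d' := by rw [hw]; simp
      have hxd : y ∈ π d := by rw [hsplit]; simp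
      have hdd : d' = d := by
        by_contra hne
        exact hdisj d' d hne y hxd' hxd
      rw [hdd] at hw
      have hnodup : (s ++ y :: t).Nodup := by
        rw [← hsplit]; exact (isPath_sorted htopo (hpath d)).nodup
      have heq : s ++ y :: t = u ++ y :: (z :: w) := by rw [← hsplit, hw]
      obtain ⟨hsu, htw⟩ := nodup_append_cons_eq heq hnodup
      have hz : (z :: r) <+: z :: w := by
        refine ih z d (s ++ [y]) w rfl ?_ (List.isChain_cons_cons.mp hch).2
        rw [hsplit, htw]; simp
      rw [htw]
      exact List.cons_prefix_cons.mpr ⟨rfl, hz⟩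

include htopo hpath hdisj in
lemma cond_iff (b : {x // x ∈ J}) (y : {x // x ∈ I}) (ρ : List (Fin p))
    (hρ : IsPath E ↑b ↑y ρ) :
    (∀ z ∈ ρ.zip ρ.tail, z ∈ sysEdges π) ↔ (b = τ.symm y ∧ ρ = π b) := by
  constructor
  · intro hS
    have hchain : ρ.Chain' fun a b => (a, b) ∈ sysEdges π :=
      chain'_iff_zip.mpr hS
    obtain ⟨t0, ht0⟩ := isPath_head_cons (hpath b)
    have hpre : ρ <+: (↑b : Fin p) :: t0 :=
      chainS_prefix htopo hpath hdisj ρ ↑b b [] t0 hρ.1 (by rw [ht0]; rfl) hchain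
    have hpre' : ρ <+: π b := ht0 ▸ hpre
    have hyρ : (↑y : Fin p) ∈ ρ := isPath_getLast_mem hρ
    have hyb : (↑y : Fin p) ∈ π b := hpre'.subset hyρ
    have hyν : (↑y : Fin p) ∈ π (τ.symm y) := by
      have := isPath_getLast_mem (hpath (τ.symm y))
      rwa [Equiv.apply_symm_apply] at this
    have hbeq : b = τ.symm y := by
      by_contra hne
      exact hdisj b (τ.symm y) hne ↑y hyb hyν
    refine ⟨hbeq, ?_⟩
    refine prefix_eq_of_getLast_mem hpre' (isPath_sorted htopo (hpath b)).nodup ?_ hyρ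
    have hgl := (hpath b).2.1
    have hτb : τ b = y := by rw [hbeq, Equiv.apply_symm_apply]
    rwa [hτb] at hgl
  · rintro ⟨hbeq, rfl⟩
    intro z hz
    exact Finset.mem_biUnion.mpr ⟨b, Finset.mem_univ _, List.mem_toFinset.mpr hz⟩

include htopo hpath hdisj in
lemma eval_pathMatrix_entry (b : {x // x ∈ J}) (y : {x // x ∈ I}) :
    MvPolynomial.eval
        (fun v : {e // e ∈ E} => if (v : Fin p × Fin p) ∈ sysEdges π then (1 : ℝ) else 0)
        (pathMatrix E ↑y ↑b) = if b = τ.symm y then 1 else 0 := by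
  classical
  have hPM : pathMatrix E (↑y : Fin p) ↑b = ∑ ρ ∈ pathFinset E ↑b ↑y, pathMonomial E ρ := rfl
  rw [hPM, map_sum]
  have hterm : ∀ ρ ∈ pathFinset E ↑b ↑y,
      MvPolynomial.eval
          (fun v : {e // e ∈ E} => if (v : Fin p × Fin p) ∈ sysEdges π then (1 : ℝ) else 0)
          (pathMonomial E ρ) = if b = τ.symm y ∧ ρ = π b then 1 else 0 := by
    intro ρ hρ
    have hρ' := (mem_pathFinset htopo).mp hρ
    have hE : ∀ z ∈ ρ.zip ρ.tail, z ∈ E := chain'_iff_zip.mp hρ'.2.2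
    rw [pathMonomial_def, map_list_prod, List.map_map]
    have hmap : ((ρ.zip ρ.tail).map
        ((MvPolynomial.eval fun v : {e // e ∈ E} =>
          if (v : Fin p × Fin p) ∈ sysEdges π then (1 : ℝ) else 0) ∘ edgeX E)) =
        (ρ.zip ρ.tail).map fun z => if z ∈ sysEdges π ∧ z ∈ E then (1 : ℝ) else 0 := by
      refine List.map_congr_left fun z hz => ?_
      have hzE := hE z hz
      simp [Function.comp, edgeX, hzE]
    rw [hmap, prod_indicator]
    by_cases hc : ∀ z ∈ ρ.zip ρ.tail, z ∈ sysEdges π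
    · rw [if_pos fun z hz => ⟨hc z hz, hE z hz⟩,
        if_pos ((cond_iff htopo hpath hdisj b y ρ hρ').mp hc)]
    · rw [if_neg fun h => hc fun z hz => (h z hz).1, if_neg]
      intro hcon
      exact hc ((cond_iff htopo hpath hdisj b y ρ hρ').mpr hcon)
  rw [Finset.sum_congr rfl hterm]
  by_cases hb : b = τ.symm y
  · rw [if_pos hb]
    have hcg : ∀ ρ ∈ pathFinset E ↑b ↑y,
        (if b = τ.symm y ∧ ρ = π b then (1 : ℝ) else 0) = if ρ = π b then 1 else 0 := by
      intro ρ _; simp [hb]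
    rw [Finset.sum_congr rfl hcg,
      Finset.sum_ite_eq' (pathFinset E ↑b ↑y) (π b) (fun _ => (1 : ℝ)), if_pos]
    refine (mem_pathFinset htopo).mpr ?_
    have hpb := hpath b
    have hτ : (↑(τ b) : Fin p) = ↑y := by rw [hb, Equiv.apply_symm_apply]
    rwa [hτ] at hpb
  · simp [hb]

include htopo hpath hdisj in
lemma det_ne_zero_backward (e : {x // x ∈ J} ≃ {x // x ∈ I}) :
    Matrix.det
        (Matrix.of fun a b : {x // x ∈ J} =>
          (1 - genMatrix E)⁻¹ (↑(e a) : Fin p) (↑b : Fin p)) ≠ 0 := by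
  classical
  rw [inv_eq_pathMatrix htopo]
  intro h0
  set φ : MvPolynomial {e // e ∈ E} ℝ →+* ℝ :=
    MvPolynomial.eval
      (fun v : {e // e ∈ E} => if (v : Fin p × Fin p) ∈ sysEdges π then (1 : ℝ) else 0)
    with hφ
  have h1 : φ (Matrix.det (Matrix.of fun a b : {x // x ∈ J} =>
      pathMatrix E (↑(e a) : Fin p) (↑b : Fin p))) = 0 := by rw [h0, map_zero]
  rw [RingHom.map_det] at h1
  set ν : Equiv.Perm {x // x ∈ J} := e.trans τ.symm with hν
  have hQ : φ.mapMatrix (Matrix.of fun a b : {x // x ∈ J} =>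
      pathMatrix E (↑(e a) : Fin p) (↑b : Fin p)) = ν.permMatrix ℝ := by
    refine Matrix.ext fun a b => ?_
    have := eval_pathMatrix_entry htopo hpath hdisj b (e a)
    simp only [RingHom.mapMatrix_apply, Matrix.map_apply, Matrix.of_apply]
    rw [hφ]
    rw [this]
    simp only [Equiv.Perm.permMatrix, PEquiv.toMatrix_apply, Equiv.toPEquiv_apply, Option.mem_def, Option.some.injEq, hν,
      Equiv.trans_apply, Matrix.one_apply]
    by_cases hab : b = τ.symm (e a)
    · rw [if_pos hab, if_pos hab.symm]
    · rw [if_neg hab, if_neg fun h => hab h.symm]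
  rw [hQ, Matrix.det_permutation] at h1
  rcases Int.units_eq_one_or (Equiv.Perm.sign ν) with hs | hs <;> rw [hs] at h1 <;>
    simp at h1

end backward

section involution

variable {J : Finset (Fin p)}

def badSet (g : {x // x ∈ J} → List (Fin p)) : Finset {x // x ∈ J} :=
  Finset.univ.filter fun c => ∃ d, d ≠ c ∧ ∃ w, w ∈ g c ∧ w ∈ g d

lemma mem_badSet {g : {x // x ∈ J} → List (Fin p)} {c : {x // x ∈ J}} :
    c ∈ badSet g ↔ ∃ d, d ≠ c ∧ ∃ w : Fin p, w ∈ g c ∧ w ∈ g d := by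
  simp [badSet]

def aOf (g : {x // x ∈ J} → List (Fin p)) (h : (badSet g).Nonempty) : {x // x ∈ J} :=
  (badSet g).min' h

def vSet (g : {x // x ∈ J} → List (Fin p)) (h : (badSet g).Nonempty) : Finset (Fin p) :=
  ((g (aOf g h)).toFinset).filter fun w => ∃ d, d ≠ aOf g h ∧ w ∈ g d

lemma mem_vSet {g : {x // x ∈ J} → List (Fin p)} {h : (badSet g).Nonempty} {w : Fin p} :
    w ∈ vSet g h ↔ w ∈ g (aOf g h) ∧ ∃ d, d ≠ aOf g h ∧ w ∈ g d := by
  simp [vSet]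

lemma vSet_nonempty (g : {x // x ∈ J} → List (Fin p)) (h : (badSet g).Nonempty) :
    (vSet g h).Nonempty := by
  obtain ⟨d, hd, w, hw1, hw2⟩ := mem_badSet.mp ((badSet g).min'_mem h)
  exact ⟨w, mem_vSet.mpr ⟨hw1, d, hd, hw2⟩⟩

def vOf (g : {x // x ∈ J} → List (Fin p)) (h : (badSet g).Nonempty) : Fin p :=
  (vSet g h).min' (vSet_nonempty g h)

def bSet (g : {x // x ∈ J} → List (Fin p)) (h : (badSet g).Nonempty) :
    Finset {x // x ∈ J} :=
  Finset.univ.filter fun d => d ≠ aOf g h ∧ vOf g h ∈ g d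

lemma mem_bSet {g : {x // x ∈ J} → List (Fin p)} {h : (badSet g).Nonempty}
    {d : {x // x ∈ J}} : d ∈ bSet g h ↔ d ≠ aOf g h ∧ vOf g h ∈ g d := by
  simp [bSet]

lemma vOf_mem_vSet (g : {x // x ∈ J} → List (Fin p)) (h : (badSet g).Nonempty) :
    vOf g h ∈ vSet g h := (vSet g h).min'_mem _

lemma vOf_mem_a (g : {x // x ∈ J} → List (Fin p)) (h : (badSet g).Nonempty) :
    vOf g h ∈ g (aOf g h) := (mem_vSet.mp (vOf_mem_vSet g h)).1

lemma bSet_nonempty (g : {x // x ∈ J} → List (Fin p)) (h : (badSet g).Nonempty) :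
    (bSet g h).Nonempty := by
  obtain ⟨_, d, hd, hw⟩ := mem_vSet.mp (vOf_mem_vSet g h)
  exact ⟨d, mem_bSet.mpr ⟨hd, hw⟩⟩

def bOf (g : {x // x ∈ J} → List (Fin p)) (h : (badSet g).Nonempty) : {x // x ∈ J} :=
  (bSet g h).min' (bSet_nonempty g h)

lemma bOf_mem_bSet (g : {x // x ∈ J} → List (Fin p)) (h : (badSet g).Nonempty) :
    bOf g h ∈ bSet g h := (bSet g h).min'_mem _

lemma bOf_ne (g : {x // x ∈ J} → List (Fin p)) (h : (badSet g).Nonempty) :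
    bOf g h ≠ aOf g h := (mem_bSet.mp (bOf_mem_bSet g h)).1

lemma vOf_mem_b (g : {x // x ∈ J} → List (Fin p)) (h : (badSet g).Nonempty) :
    vOf g h ∈ g (bOf g h) := (mem_bSet.mp (bOf_mem_bSet g h)).2

lemma aOf_lt_bOf (g : {x // x ∈ J} → List (Fin p)) (h : (badSet g).Nonempty) :
    aOf g h < bOf g h := by
  have hmem : bOf g h ∈ badSet g :=
    mem_badSet.mpr ⟨aOf g h, fun hc => bOf_ne g h hc.symm, vOf g h,
      vOf_mem_b g h, vOf_mem_a g h⟩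
  exact lt_of_le_of_ne ((badSet g).min'_le _ hmem) (fun hc => bOf_ne g h hc.symm)

def cutA (g : {x // x ∈ J} → List (Fin p)) (h : (badSet g).Nonempty) : List (Fin p) :=
  (g (aOf g h)).takeWhile fun z => decide (z ≠ vOf g h)

def tailA (g : {x // x ∈ J} → List (Fin p)) (h : (badSet g).Nonempty) : List (Fin p) :=
  ((g (aOf g h)).dropWhile fun z => decide (z ≠ vOf g h)).tail

def cutB (g : {x // x ∈ J} → List (Fin p)) (h : (badSet g).Nonempty) : List (Fin p) :=
  (g (bOf g h)).takeWhile fun z => decide (z ≠ vOf g h)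

def tailB (g : {x // x ∈ J} → List (Fin p)) (h : (badSet g).Nonempty) : List (Fin p) :=
  ((g (bOf g h)).dropWhile fun z => decide (z ≠ vOf g h)).tail

lemma split_gen {l : List (Fin p)} {v : Fin p} (hv : v ∈ l) (hn : l.Nodup) :
    l = l.takeWhile (fun z => decide (z ≠ v)) ++
      v :: (l.dropWhile (fun z => decide (z ≠ v))).tail := by
  obtain ⟨s, t, rfl⟩ := List.append_of_mem hv
  have hvs : ∀ y ∈ s, y ≠ v := by
    intro y hy hyv
    exact List.disjoint_of_nodup_append hn hy (by simp [hyv])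
  obtain ⟨h1, h2⟩ := takeWhile_append_cons s t v hvs
  rw [h1, h2, List.tail_cons]

lemma split_a (g : {x // x ∈ J} → List (Fin p)) (h : (badSet g).Nonempty)
    (hn : (g (aOf g h)).Nodup) : g (aOf g h) = cutA g h ++ vOf g h :: tailA g h :=
  split_gen (vOf_mem_a g h) hn

lemma split_b (g : {x // x ∈ J} → List (Fin p)) (h : (badSet g).Nonempty)
    (hn : (g (bOf g h)).Nodup) : g (bOf g h) = cutB g h ++ vOf g h :: tailB g h :=
  split_gen (vOf_mem_b g h) hn

lemma cutA_ne (g : {x // x ∈ J} → List (Fin p)) (h : (badSet g).Nonempty) :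
    ∀ y ∈ cutA g h, y ≠ vOf g h := by
  intro y hy
  simpa using List.mem_takeWhile_imp hy

lemma cutB_ne (g : {x // x ∈ J} → List (Fin p)) (h : (badSet g).Nonempty) :
    ∀ y ∈ cutB g h, y ≠ vOf g h := by
  intro y hy
  simpa using List.mem_takeWhile_imp hy

def swapPaths (g : {x // x ∈ J} → List (Fin p)) (h : (badSet g).Nonempty) :
    {x // x ∈ J} → List (Fin p) :=
  Function.update (Function.update g (aOf g h) (cutA g h ++ vOf g h :: tailB g h))
    (bOf g h) (cutB g h ++ vOf g h :: tailA g h)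

lemma swapPaths_a (g : {x // x ∈ J} → List (Fin p)) (h : (badSet g).Nonempty) :
    swapPaths g h (aOf g h) = cutA g h ++ vOf g h :: tailB g h := by
  rw [swapPaths, Function.update_of_ne (fun hc => bOf_ne g h hc.symm : aOf g h ≠ bOf g h),
    Function.update_self]

lemma swapPaths_b (g : {x // x ∈ J} → List (Fin p)) (h : (badSet g).Nonempty) :
    swapPaths g h (bOf g h) = cutB g h ++ vOf g h :: tailA g h := by
  rw [swapPaths, Function.update_self]

lemma swapPaths_other (g : {x // x ∈ J} → List (Fin p)) (h : (badSet g).Nonempty)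
    {c : {x // x ∈ J}} (hc1 : c ≠ aOf g h) (hc2 : c ≠ bOf g h) :
    swapPaths g h c = g c := by
  rw [swapPaths, Function.update_of_ne hc2, Function.update_of_ne hc1]

lemma head?_append_cons {α : Type*} (s t t' : List α) (v : α) :
    (s ++ v :: t).head? = (s ++ v :: t').head? := by cases s <;> rfl

lemma getLast?_append_cons {α : Type*} (s t : List α) (v : α) :
    (s ++ v :: t).getLast? = (v :: t).getLast? := by
  rw [List.getLast?_append, List.getLast?_eq_getLast_of_ne_nil (l := v :: t) (by simp)]
  rfl

lemma chain'_swap_piece {α : Type*} {R : α → α → Prop} {sA tA sB tB : List α} {v : α}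
    (hA : List.Chain' R (sA ++ v :: tA)) (hB : List.Chain' R (sB ++ v :: tB)) :
    List.Chain' R (sA ++ v :: tB) := by
  simp only [List.Chain'] at hA hB ⊢
  rw [List.isChain_append] at hA hB ⊢
  refine ⟨hA.1, hB.2.1, ?_⟩
  intro x hx y hy
  obtain rfl : v = y := by simpa using hy
  exact hA.2.2 x hx v (by simp)

variable {E : Finset (Fin p × Fin p)} {J : Finset (Fin p)}

section swaplemmas

variable (g : {x // x ∈ J} → List (Fin p)) (h : (badSet g).Nonempty)

lemma v_min : ∀ w, w ∈ g (aOf g h) → (∃ d, d ≠ aOf g h ∧ w ∈ g d) → vOf g h ≤ w :=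
  fun w h1 h2 => (vSet g h).min'_le w (mem_vSet.mpr ⟨h1, h2⟩)

lemma b_min : ∀ d, d ≠ aOf g h → vOf g h ∈ g d → bOf g h ≤ d :=
  fun d h1 h2 => (bSet g h).min'_le d (mem_bSet.mpr ⟨h1, h2⟩)

lemma cutA_subset (hn : ∀ c, (g c).Nodup) : ∀ w ∈ cutA g h, w ∈ g (aOf g h) := by
  intro w hw; rw [split_a g h (hn _)]; exact List.mem_append_left _ hw

lemma cutB_subset (hn : ∀ c, (g c).Nodup) : ∀ w ∈ cutB g h, w ∈ g (bOf g h) := by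
  intro w hw; rw [split_b g h (hn _)]; exact List.mem_append_left _ hw

lemma tailA_subset (hn : ∀ c, (g c).Nodup) : ∀ w ∈ tailA g h, w ∈ g (aOf g h) := by
  intro w hw; rw [split_a g h (hn _)]; exact List.mem_append_right _ (by simp [hw])

lemma tailB_subset (hn : ∀ c, (g c).Nodup) : ∀ w ∈ tailB g h, w ∈ g (bOf g h) := by
  intro w hw; rw [split_b g h (hn _)]; exact List.mem_append_right _ (by simp [hw])

lemma swap_isPath (hnn : ∀ c, (g c).Nodup) {ya yb : Fin p}
    (hA : IsPath E ↑(aOf g h) ya (g (aOf g h)))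
    (hB : IsPath E ↑(bOf g h) yb (g (bOf g h))) :
    IsPath E ↑(aOf g h) yb (swapPaths g h (aOf g h)) ∧
      IsPath E ↑(bOf g h) ya (swapPaths g h (bOf g h)) := by
  have hsa := split_a g h (hnn _)
  have hsb := split_b g h (hnn _)
  rw [swapPaths_a, swapPaths_b]
  constructor
  · refine ⟨?_, ?_, ?_⟩
    · rw [head?_append_cons _ _ (tailA g h), ← hsa]; exact hA.1
    · rw [getLast?_append_cons, ← getLast?_append_cons (cutB g h), ← hsb]; exact hB.2.1
    · exact chain'_swap_piece (hsa ▸ hA.2.2) (hsb ▸ hB.2.2)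
  · refine ⟨?_, ?_, ?_⟩
    · rw [head?_append_cons _ _ (tailB g h), ← hsb]; exact hB.1
    · rw [getLast?_append_cons, ← getLast?_append_cons (cutA g h), ← hsa]; exact hA.2.1
    · exact chain'_swap_piece (hsb ▸ hB.2.2) (hsa ▸ hA.2.2)

lemma swap_monomial (hnn : ∀ c, (g c).Nodup) :
    pathMonomial E (swapPaths g h (aOf g h)) * pathMonomial E (swapPaths g h (bOf g h)) =
      pathMonomial E (g (aOf g h)) * pathMonomial E (g (bOf g h)) := by
  rw [swapPaths_a, swapPaths_b]
  conv_rhs => rw [split_a g h (hnn _), split_b g h (hnn _)]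
  rw [pathMonomial_append E (cutA g h) (tailB g h) (vOf g h),
    pathMonomial_append E (cutB g h) (tailA g h) (vOf g h),
    pathMonomial_append E (cutA g h) (tailA g h) (vOf g h),
    pathMonomial_append E (cutB g h) (tailB g h) (vOf g h)]
  ring

lemma badSet_swap_nonempty : (badSet (swapPaths g h)).Nonempty := by
  refine ⟨aOf g h, mem_badSet.mpr ⟨bOf g h, bOf_ne g h, vOf g h, ?_, ?_⟩⟩
  · rw [swapPaths_a]; simp
  · rw [swapPaths_b]; simp

lemma aOf_swap (hnn : ∀ c, (g c).Nodup) (h' : (badSet (swapPaths g h)).Nonempty) :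
    aOf (swapPaths g h) h' = aOf g h := by
  apply _root_.le_antisymm
  · refine Finset.min'_le _ _ (mem_badSet.mpr ⟨bOf g h, bOf_ne g h, vOf g h, ?_, ?_⟩)
    · rw [swapPaths_a]; simp
    · rw [swapPaths_b]; simp
  · apply Finset.le_min'
    intro c hc
    obtain ⟨d, hdc, w, hwc, hwd⟩ := mem_badSet.mp hc
    by_cases hca : c = aOf g h
    · rw [hca]
    by_cases hcb : c = bOf g h
    · rw [hcb]; exact le_of_lt (aOf_lt_bOf g h)
    rw [swapPaths_other g h hca hcb] at hwc
    have hex : ∃ d', d' ≠ c ∧ w ∈ g d' := by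
      by_cases hda : d = aOf g h
      · rw [hda, swapPaths_a] at hwd
        rcases List.mem_append.mp hwd with hw1 | hw2
        · exact ⟨aOf g h, fun hc' => hca hc'.symm, cutA_subset g h hnn w hw1⟩
        · rcases List.mem_cons.mp hw2 with rfl | hw3
          · exact ⟨aOf g h, fun hc' => hca hc'.symm, vOf_mem_a g h⟩
          · exact ⟨bOf g h, fun hc' => hcb hc'.symm, tailB_subset g h hnn w hw3⟩
      · by_cases hdb : d = bOf g h
        · rw [hdb, swapPaths_b] at hwd
          rcases List.mem_append.mp hwd with hw1 | hw2
          · exact ⟨bOf g h, fun hc' => hcb hc'.symm, cutB_subset g h hnn w hw1⟩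
          · rcases List.mem_cons.mp hw2 with rfl | hw3
            · exact ⟨bOf g h, fun hc' => hcb hc'.symm, vOf_mem_b g h⟩
            · exact ⟨aOf g h, fun hc' => hca hc'.symm, tailA_subset g h hnn w hw3⟩
        · exact ⟨d, hdc, by rwa [swapPaths_other g h hda hdb] at hwd⟩
    obtain ⟨d', hd', hwd'⟩ := hex
    exact (badSet g).min'_le _ (mem_badSet.mpr ⟨d', hd', w, hwc, hwd'⟩)

lemma suffix_ge_a (hs : ∀ c, List.Pairwise (· < ·) (g c)) : ∀ w ∈ vOf g h :: tailA g h, vOf g h ≤ w := by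
  have hsub : (vOf g h :: tailA g h) <+ g (aOf g h) := by
    rw [split_a g h (hs _).nodup]; exact List.sublist_append_right _ _
  have hsrt : List.Pairwise (· < ·) (vOf g h :: tailA g h) := (hs _).sublist hsub
  exact fun w hw => sorted_head_le hsrt hw

lemma suffix_ge_b (hs : ∀ c, List.Pairwise (· < ·) (g c)) : ∀ w ∈ vOf g h :: tailB g h, vOf g h ≤ w := by
  have hsub : (vOf g h :: tailB g h) <+ g (bOf g h) := by
    rw [split_b g h (hs _).nodup]; exact List.sublist_append_right _ _
  have hsrt : List.Pairwise (· < ·) (vOf g h :: tailB g h) := (hs _).sublist hsub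
  exact fun w hw => sorted_head_le hsrt hw

lemma vOf_swap (hs : ∀ c, List.Pairwise (· < ·) (g c)) (h' : (badSet (swapPaths g h)).Nonempty)
    (ha : aOf (swapPaths g h) h' = aOf g h) : vOf (swapPaths g h) h' = vOf g h := by
  have hnn : ∀ c, (g c).Nodup := fun c => (hs c).nodup
  apply _root_.le_antisymm
  · refine Finset.min'_le _ _ (mem_vSet.mpr ⟨?_, bOf g h, ?_, ?_⟩)
    · rw [ha, swapPaths_a]; simp
    · rw [ha]; exact bOf_ne g h
    · rw [swapPaths_b]; simp
  · apply Finset.le_min'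
    intro w hw
    obtain ⟨hw1, d, hd, hwd⟩ := mem_vSet.mp hw
    rw [ha, swapPaths_a] at hw1
    rw [ha] at hd
    rcases List.mem_append.mp hw1 with hwcut | hwtail
    · -- w ∈ cutA, hence w ∈ g a; find a witness path containing w
      have hwga : w ∈ g (aOf g h) := cutA_subset g h hnn w hwcut
      by_cases hdb : d = bOf g h
      · rw [hdb, swapPaths_b] at hwd
        rcases List.mem_append.mp hwd with hw2 | hw3
        · exact v_min g h w hwga ⟨bOf g h, bOf_ne g h, cutB_subset g h hnn w hw2⟩
        · exact suffix_ge_a g h hs w hw3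
      · rw [swapPaths_other g h hd hdb] at hwd
        exact v_min g h w hwga ⟨d, hd, hwd⟩
    · exact suffix_ge_b g h hs w hwtail

lemma bOf_swap (h' : (badSet (swapPaths g h)).Nonempty)
    (ha : aOf (swapPaths g h) h' = aOf g h)
    (hv : vOf (swapPaths g h) h' = vOf g h) : bOf (swapPaths g h) h' = bOf g h := by
  apply _root_.le_antisymm
  · refine Finset.min'_le _ _ (mem_bSet.mpr ⟨?_, ?_⟩)
    · rw [ha]; exact bOf_ne g h
    · rw [hv, swapPaths_b]; simp
  · apply Finset.le_min'
    intro d hd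
    obtain ⟨hd1, hd2⟩ := mem_bSet.mp hd
    rw [ha] at hd1
    rw [hv] at hd2
    by_cases hdb : d = bOf g h
    · rw [hdb]
    · rw [swapPaths_other g h hd1 hdb] at hd2
      exact b_min g h d hd1 hd2

lemma swapPaths_swap (hs : ∀ c, List.Pairwise (· < ·) (g c)) (h' : (badSet (swapPaths g h)).Nonempty) :
    swapPaths (swapPaths g h) h' = g := by
  have hnn : ∀ c, (g c).Nodup := fun c => (hs c).nodup
  have ha := aOf_swap g h hnn h'
  have hv := vOf_swap g h hs h' ha
  have hb := bOf_swap g h h' ha hv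
  have hcutA' : cutA (swapPaths g h) h' = cutA g h := by
    rw [cutA, ha, hv, swapPaths_a]
    exact (takeWhile_append_cons _ _ _ (cutA_ne g h)).1
  have hcutB' : cutB (swapPaths g h) h' = cutB g h := by
    rw [cutB, hb, hv, swapPaths_b]
    exact (takeWhile_append_cons _ _ _ (cutB_ne g h)).1
  have htailA' : tailA (swapPaths g h) h' = tailB g h := by
    rw [tailA, ha, hv, swapPaths_a,
      (takeWhile_append_cons _ _ _ (cutA_ne g h)).2, List.tail_cons]
  have htailB' : tailB (swapPaths g h) h' = tailA g h := by
    rw [tailB, hb, hv, swapPaths_b,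
      (takeWhile_append_cons _ _ _ (cutB_ne g h)).2, List.tail_cons]
  funext c
  by_cases hca : c = aOf g h
  · have e1 : swapPaths (swapPaths g h) h' (aOf g h) =
        cutA (swapPaths g h) h' ++ vOf (swapPaths g h) h' :: tailB (swapPaths g h) h' := by
      rw [← ha]; exact swapPaths_a _ _
    rw [hca, e1, hcutA', hv, htailB', ← split_a g h (hnn _)]
  · by_cases hcb : c = bOf g h
    · have e1 : swapPaths (swapPaths g h) h' (bOf g h) =
          cutB (swapPaths g h) h' ++ vOf (swapPaths g h) h' :: tailA (swapPaths g h) h' := by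
        rw [← hb]; exact swapPaths_b _ _
      rw [hcb, e1, hcutB', hv, htailA', ← split_b g h (hnn _)]
    · have h1 : c ≠ aOf (swapPaths g h) h' := by rw [ha]; exact hca
      have h2 : c ≠ bOf (swapPaths g h) h' := by rw [hb]; exact hcb
      rw [swapPaths_other (swapPaths g h) h' h1 h2, swapPaths_other g h hca hcb]

end swaplemmas

end involution

section forward

variable {E : Finset (Fin p × Fin p)} {J I : Finset (Fin p)}

noncomputable def swapSys
    (x : Σ _ : Equiv.Perm {x // x ∈ J}, ({x // x ∈ J} → List (Fin p))) :
    Σ _ : Equiv.Perm {x // x ∈ J}, ({x // x ∈ J} → List (Fin p)) :=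
  if h : (badSet x.2).Nonempty then
    ⟨x.1 * Equiv.swap (aOf x.2 h) (bOf x.2 h), swapPaths x.2 h⟩
  else x

variable (htopo : ∀ e ∈ E, e.1 < e.2) (e : {x // x ∈ J} ≃ {x // x ∈ I})

include htopo in
lemma sum_nondisjoint_zero :
    ∑ x ∈ (Finset.univ.sigma fun σ : Equiv.Perm {x // x ∈ J} =>
        Fintype.piFinset fun c : {x // x ∈ J} => pathFinset E ↑c ↑(e (σ c))).filter
        (fun x => ¬ ∀ a b : {x // x ∈ J}, a ≠ b → ∀ v : Fin p, v ∈ x.2 a → v ∉ x.2 b),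
      Equiv.Perm.sign x.1 • ∏ c : {x // x ∈ J}, pathMonomial E (x.2 c) = 0 := by
  classical
  refine Finset.sum_involution (fun x _ => swapSys x) ?_ ?_ ?_ ?_
  · -- f x + f (swapSys x) = 0
    rintro ⟨σ, g⟩ hx
    obtain ⟨hmem, hnd⟩ := Finset.mem_filter.mp hx
    obtain ⟨-, hpi⟩ := Finset.mem_sigma.mp hmem
    have hpaths : ∀ c : {x // x ∈ J}, IsPath E ↑c ↑(e (σ c)) (g c) := fun c =>
      (mem_pathFinset htopo).mp (Fintype.mem_piFinset.mp hpi c)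
    have hsort : ∀ c, List.Pairwise (· < ·) (g c) := fun c => isPath_sorted htopo (hpaths c)
    have hn : ∀ c, (g c).Nodup := fun c => (hsort c).nodup
    push_neg at hnd
    obtain ⟨a0, b0, hab0, v0, hv0a, hv0b⟩ := hnd
    have hbad : (badSet g).Nonempty :=
      ⟨b0, mem_badSet.mpr ⟨a0, hab0, v0, hv0b, hv0a⟩⟩
    have hswap : swapSys (⟨σ, g⟩ : Σ _ : Equiv.Perm {x // x ∈ J},
        ({x // x ∈ J} → List (Fin p))) =
        ⟨σ * Equiv.swap (aOf g hbad) (bOf g hbad), swapPaths g hbad⟩ := by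
      simp only [swapSys]
      rw [dif_pos hbad]
    beta_reduce
    rw [hswap]
    have hprod : ∀ gg : {x // x ∈ J} → List (Fin p),
        ∏ c, pathMonomial E (gg c) =
          pathMonomial E (gg (aOf g hbad)) * pathMonomial E (gg (bOf g hbad)) *
            ∏ c ∈ (Finset.univ.erase (aOf g hbad)).erase (bOf g hbad),
              pathMonomial E (gg c) := by
      intro gg
      rw [mul_assoc,
        Finset.mul_prod_erase (Finset.univ.erase (aOf g hbad))
          (fun c => pathMonomial E (gg c))
          (Finset.mem_erase.mpr ⟨bOf_ne g hbad, Finset.mem_univ _⟩),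
        Finset.mul_prod_erase Finset.univ (fun c => pathMonomial E (gg c))
          (Finset.mem_univ (aOf g hbad))]
    have hprodeq : ∏ c, pathMonomial E (swapPaths g hbad c) =
        ∏ c, pathMonomial E (g c) := by
      rw [hprod (swapPaths g hbad), hprod g, swap_monomial g hbad hn]
      congr 1
      refine Finset.prod_congr rfl fun c hc => ?_
      obtain ⟨hcb, hc2⟩ := Finset.mem_erase.mp hc
      obtain ⟨hca, -⟩ := Finset.mem_erase.mp hc2
      rw [swapPaths_other g hbad hca hcb]
    have hne : aOf g hbad ≠ bOf g hbad := ne_of_lt (aOf_lt_bOf g hbad)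
    have hsign : Equiv.Perm.sign (σ * Equiv.swap (aOf g hbad) (bOf g hbad)) =
        - Equiv.Perm.sign σ := by
      rw [map_mul, Equiv.Perm.sign_swap hne, mul_neg_one]
    show Equiv.Perm.sign σ • ∏ c, pathMonomial E (g c) +
      Equiv.Perm.sign (σ * Equiv.swap (aOf g hbad) (bOf g hbad)) •
        ∏ c, pathMonomial E (swapPaths g hbad c) = 0
    rw [hprodeq, hsign, Units.smul_def, Units.smul_def, Units.val_neg, neg_smul]
    exact add_neg_cancel _
  · -- swapSys x ≠ x
    rintro ⟨σ, g⟩ hx -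
    obtain ⟨-, hnd⟩ := Finset.mem_filter.mp hx
    push_neg at hnd
    obtain ⟨a0, b0, hab0, v0, hv0a, hv0b⟩ := hnd
    have hbad : (badSet g).Nonempty :=
      ⟨b0, mem_badSet.mpr ⟨a0, hab0, v0, hv0b, hv0a⟩⟩
    have hswap : swapSys (⟨σ, g⟩ : Σ _ : Equiv.Perm {x // x ∈ J},
        ({x // x ∈ J} → List (Fin p))) =
        ⟨σ * Equiv.swap (aOf g hbad) (bOf g hbad), swapPaths g hbad⟩ := by
      simp only [swapSys]
      rw [dif_pos hbad]
    beta_reduce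
    rw [hswap]
    intro heq
    have h1 : σ * Equiv.swap (aOf g hbad) (bOf g hbad) = σ := congrArg Sigma.fst heq
    have h2 : σ (Equiv.swap (aOf g hbad) (bOf g hbad) (aOf g hbad)) = σ (aOf g hbad) :=
      congrFun (congrArg DFunLike.coe h1) (aOf g hbad)
    rw [Equiv.swap_apply_left] at h2
    exact ne_of_lt (aOf_lt_bOf g hbad) (σ.injective h2).symm
  · -- membership
    rintro ⟨σ, g⟩ hx
    obtain ⟨hmem, hnd⟩ := Finset.mem_filter.mp hx
    obtain ⟨-, hpi⟩ := Finset.mem_sigma.mp hmem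
    have hpaths : ∀ c : {x // x ∈ J}, IsPath E ↑c ↑(e (σ c)) (g c) := fun c =>
      (mem_pathFinset htopo).mp (Fintype.mem_piFinset.mp hpi c)
    have hsort : ∀ c, List.Pairwise (· < ·) (g c) := fun c => isPath_sorted htopo (hpaths c)
    have hn : ∀ c, (g c).Nodup := fun c => (hsort c).nodup
    push_neg at hnd
    obtain ⟨a0, b0, hab0, v0, hv0a, hv0b⟩ := hnd
    have hbad : (badSet g).Nonempty :=
      ⟨b0, mem_badSet.mpr ⟨a0, hab0, v0, hv0b, hv0a⟩⟩
    have hswap : swapSys (⟨σ, g⟩ : Σ _ : Equiv.Perm {x // x ∈ J},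
        ({x // x ∈ J} → List (Fin p))) =
        ⟨σ * Equiv.swap (aOf g hbad) (bOf g hbad), swapPaths g hbad⟩ := by
      simp only [swapSys]
      rw [dif_pos hbad]
    beta_reduce
    rw [hswap]
    have hip := swap_isPath g hbad hn (hpaths (aOf g hbad)) (hpaths (bOf g hbad))
    refine Finset.mem_filter.mpr ⟨Finset.mem_sigma.mpr ⟨Finset.mem_univ _, ?_⟩, ?_⟩
    · refine Fintype.mem_piFinset.mpr fun c => ?_
      show swapPaths g hbad c ∈
        pathFinset E ↑c ↑(e ((σ * Equiv.swap (aOf g hbad) (bOf g hbad)) c))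
      by_cases hca : c = aOf g hbad
      · subst hca
        refine (mem_pathFinset htopo).mpr ?_
        rw [Equiv.Perm.mul_apply, Equiv.swap_apply_left]
        exact hip.1
      · by_cases hcb : c = bOf g hbad
        · subst hcb
          refine (mem_pathFinset htopo).mpr ?_
          rw [Equiv.Perm.mul_apply, Equiv.swap_apply_right]
          exact hip.2
        · rw [swapPaths_other g hbad hca hcb]
          refine (mem_pathFinset htopo).mpr ?_
          rw [Equiv.Perm.mul_apply, Equiv.swap_apply_of_ne_of_ne hca hcb]
          exact hpaths c
    · intro hdis
      have hva : vOf g hbad ∈ swapPaths g hbad (aOf g hbad) := by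
        rw [swapPaths_a]; simp
      have hvb : vOf g hbad ∈ swapPaths g hbad (bOf g hbad) := by
        rw [swapPaths_b]; simp
      exact hdis (aOf g hbad) (bOf g hbad) (ne_of_lt (aOf_lt_bOf g hbad)) (vOf g hbad)
        hva hvb
  · -- involution
    rintro ⟨σ, g⟩ hx
    obtain ⟨hmem, hnd⟩ := Finset.mem_filter.mp hx
    obtain ⟨-, hpi⟩ := Finset.mem_sigma.mp hmem
    have hpaths : ∀ c : {x // x ∈ J}, IsPath E ↑c ↑(e (σ c)) (g c) := fun c =>
      (mem_pathFinset htopo).mp (Fintype.mem_piFinset.mp hpi c)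
    have hsort : ∀ c, List.Pairwise (· < ·) (g c) := fun c => isPath_sorted htopo (hpaths c)
    push_neg at hnd
    obtain ⟨a0, b0, hab0, v0, hv0a, hv0b⟩ := hnd
    have hbad : (badSet g).Nonempty :=
      ⟨b0, mem_badSet.mpr ⟨a0, hab0, v0, hv0b, hv0a⟩⟩
    have hswap : swapSys (⟨σ, g⟩ : Σ _ : Equiv.Perm {x // x ∈ J},
        ({x // x ∈ J} → List (Fin p))) =
        ⟨σ * Equiv.swap (aOf g hbad) (bOf g hbad), swapPaths g hbad⟩ := by
      simp only [swapSys]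
      rw [dif_pos hbad]
    beta_reduce
    rw [hswap]
    have hbad' : (badSet (swapPaths g hbad)).Nonempty := badSet_swap_nonempty g hbad
    have hswap2 : swapSys (⟨σ * Equiv.swap (aOf g hbad) (bOf g hbad), swapPaths g hbad⟩ :
        Σ _ : Equiv.Perm {x // x ∈ J}, ({x // x ∈ J} → List (Fin p))) =
        ⟨σ * Equiv.swap (aOf g hbad) (bOf g hbad) *
          Equiv.swap (aOf (swapPaths g hbad) hbad') (bOf (swapPaths g hbad) hbad'),
          swapPaths (swapPaths g hbad) hbad'⟩ := by
      simp only [swapSys]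
      rw [dif_pos hbad']
    rw [hswap2]
    have hn : ∀ c, (g c).Nodup := fun c => (hsort c).nodup
    have ha := aOf_swap g hbad hn hbad'
    have hv := vOf_swap g hbad hsort hbad' ha
    have hb := bOf_swap g hbad hbad' ha hv
    have hps := swapPaths_swap g hbad hsort hbad'
    rw [ha, hb, hps, mul_assoc, Equiv.swap_mul_self, mul_one]

include htopo in
lemma exists_system_of_det_ne_zero
    (hdet : Matrix.det (Matrix.of fun a b : {x // x ∈ J} =>
      pathMatrix E (↑(e a) : Fin p) (↑b : Fin p)) ≠ 0) :
    ∃ τ : {x // x ∈ J} ≃ {x // x ∈ I}, ∃ π : {x // x ∈ J} → List (Fin p),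
      (∀ a : {x // x ∈ J}, IsPath E ↑a ↑(τ a) (π a)) ∧
      ∀ a b : {x // x ∈ J}, a ≠ b → ∀ v : Fin p, v ∈ π a → v ∉ π b := by
  classical
  by_contra hno
  apply hdet
  rw [Matrix.det_apply]
  have hstep : ∀ σ : Equiv.Perm {x // x ∈ J},
      Equiv.Perm.sign σ • ∏ c : {x // x ∈ J},
        (Matrix.of fun a b : {x // x ∈ J} =>
          pathMatrix E (↑(e a) : Fin p) (↑b : Fin p)) (σ c) c =
      ∑ g ∈ Fintype.piFinset fun c : {x // x ∈ J} => pathFinset E ↑c ↑(e (σ c)),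
        Equiv.Perm.sign σ • ∏ c : {x // x ∈ J}, pathMonomial E (g c) := by
    intro σ
    have h1 : ∏ c : {x // x ∈ J},
        (Matrix.of fun a b : {x // x ∈ J} =>
          pathMatrix E (↑(e a) : Fin p) (↑b : Fin p)) (σ c) c =
        ∏ c : {x // x ∈ J}, ∑ ρ ∈ pathFinset E ↑c ↑(e (σ c)), pathMonomial E ρ :=
      Finset.prod_congr rfl fun c _ => rfl
    rw [h1, Finset.prod_univ_sum, Finset.smul_sum]
  rw [Finset.sum_congr rfl fun σ _ => hstep σ]
  rw [← Finset.sum_sigma Finset.univ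
    (fun σ : Equiv.Perm {x // x ∈ J} =>
      Fintype.piFinset fun c : {x // x ∈ J} => pathFinset E ↑c ↑(e (σ c)))
    (fun x => Equiv.Perm.sign x.1 • ∏ c : {x // x ∈ J}, pathMonomial E (x.2 c))]
  rw [← Finset.sum_filter_add_sum_filter_not _
    (fun x : Σ _ : Equiv.Perm {x // x ∈ J}, ({x // x ∈ J} → List (Fin p)) =>
      ∀ a b : {x // x ∈ J}, a ≠ b → ∀ v : Fin p, v ∈ x.2 a → v ∉ x.2 b)]
  rw [sum_nondisjoint_zero htopo e, add_zero]
  have hempty : (Finset.univ.sigma fun σ : Equiv.Perm {x // x ∈ J} =>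
      Fintype.piFinset fun c : {x // x ∈ J} => pathFinset E ↑c ↑(e (σ c))).filter
      (fun x => ∀ a b : {x // x ∈ J}, a ≠ b → ∀ v : Fin p, v ∈ x.2 a → v ∉ x.2 b) = ∅ := by
    rw [Finset.eq_empty_iff_forall_notMem]
    rintro ⟨σ, g⟩ hx
    obtain ⟨hmem, hdis⟩ := Finset.mem_filter.mp hx
    obtain ⟨-, hpi⟩ := Finset.mem_sigma.mp hmem
    refine hno ⟨σ.trans e, g, fun c => ?_, hdis⟩
    exact (mem_pathFinset htopo).mp (Fintype.mem_piFinset.mp hpi c)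
  rw [hempty, Finset.sum_empty]

end forward

end LGVAux

/-- Gessel–Viennot–Lindström vanishing criterion for the generic
DAG matrix. Let `I, J ⊆ 𝒱` with `|I| = |J|` and let `e : J ≃ I` be any bijection used
to index the square submatrix of `(I − A)⁻¹` with rows in `I` and columns in `J`. Its
determinant is nonzero iff there are a bijection `τ : J → I` and directed paths
`π_j : j → τ(j)` (trivial when `τ(j) = j`) whose vertex sets are pairwise disjoint. -/
theorem genMatrix_inv_submatrix_det_ne_zero_iff {p : ℕ} (E : Finset (Fin p × Fin p))
    (htopo : ∀ e ∈ E, e.1 < e.2) (I J : Finset (Fin p)) (hcard : I.card = J.card)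
    (e : {x // x ∈ J} ≃ {x // x ∈ I}) :
    Matrix.det
        (Matrix.of fun a b : {x // x ∈ J} =>
          (1 - genMatrix E)⁻¹ (↑(e a) : Fin p) (↑b : Fin p)) ≠ 0 ↔
      ∃ τ : {x // x ∈ J} ≃ {x // x ∈ I}, ∃ π : {x // x ∈ J} → List (Fin p),
        (∀ a : {x // x ∈ J}, IsPath E ↑a ↑(τ a) (π a)) ∧
        ∀ a b : {x // x ∈ J}, a ≠ b → ∀ v : Fin p, v ∈ π a → v ∉ π b := by
  constructor
  · intro h
    rw [LGVAux.inv_eq_pathMatrix htopo] at h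
    exact LGVAux.exists_system_of_det_ne_zero htopo e h
  · rintro ⟨τ, π, hpath, hdisj⟩
    exact LGVAux.det_ne_zero_backward htopo hpath hdisj e
end

section
/- Let 𝒢 be a canonical DAG, l a latent node and j an observed node with de_o(l) = de_o(j). Then j is a child of l, and every other child k ∈ ch(l) ∖ {j} is a descendant of j; consequently, j precedes every other child of l in every topological order of 𝒢 (j is the first child of l). -/
open MeasureTheory ProbabilityTheory Matrix
open scoped ENNReal

section AuxFirstChild
variable {po pl : ℕ}

private lemma obs_lt (G : CanonicalDAG po pl) :
    ∀ {a : Fin po} {w}, Relation.TransGen G.edge (Sum.inl a) w →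
      ∃ b : Fin po, w = Sum.inl b ∧ a < b := by
  intro a w h
  induction h with
  | single h =>
    cases ‹CanonicalDAG.Node po pl› with
    | inl b => exact ⟨b, rfl, G.topo _ h⟩
    | inr m => exact h.elim
  | @tail c w h1 h2 ih =>
    obtain ⟨b, rfl, hab⟩ := ih
    cases w with
    | inl c => exact ⟨c, rfl, hab.trans (G.topo _ h2)⟩
    | inr m => exact h2.elim

private lemma f_lt (G : CanonicalDAG po pl) {f : CanonicalDAG.Node po pl → ℕ}
    (hf : ∀ v w, G.edge v w → f v < f w) {v w} (h : Relation.TransGen G.edge v w) :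
    f v < f w := by
  induction h with
  | single h => exact hf _ _ h
  | tail h1 h2 ih => exact ih.trans (hf _ _ h2)

end AuxFirstChild

/-- the observed node sharing observed descendants with a latent node
is its first child. If `l` is latent, `j` is observed and `de_o(l) = de_o(j)`, then `j`
is a child of `l`, every other child of `l` is a descendant of `j`, and consequently `j`
precedes every other child of `l` in every topological order of `𝒢` (a topological
order being an injective numbering `f` of the nodes with `f(v) < f(w)` whenever
`v → w` is an edge). -/
theorem first_child_of_latent_sharing_descendants {po pl : ℕ} (G : CanonicalDAG po pl)
    (l : Fin pl) (j : Fin po) (hde : G.deo (Sum.inr l) = G.deo (Sum.inl j)) :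
    (l, j) ∈ G.edgeL ∧
      (∀ k : Fin po, (l, k) ∈ G.edgeL → k ≠ j →
        Relation.TransGen G.edge (Sum.inl j) (Sum.inl k)) ∧
      ∀ f : CanonicalDAG.Node po pl → ℕ, Function.Injective f →
        (∀ v w : CanonicalDAG.Node po pl, G.edge v w → f v < f w) →
        ∀ k : Fin po, (l, k) ∈ G.edgeL → k ≠ j → f (Sum.inl j) < f (Sum.inl k) := by
  have hjmem : Sum.inl j ∈ {w | Relation.TransGen G.edge (Sum.inr l) w ∨ (Sum.inr l : CanonicalDAG.Node po pl) = w} := by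
    have : j ∈ G.deo (Sum.inl j) := Or.inr rfl
    rw [← hde] at this
    exact this
  have hjl : Relation.TransGen G.edge (Sum.inr l) (Sum.inl j) := by
    rcases hjmem with h | h
    · exact h
    · exact absurd h (by simp)
  -- every child k of l is in deo j
  have hch : ∀ k : Fin po, (l, k) ∈ G.edgeL → k = j ∨
      Relation.TransGen G.edge (Sum.inl j) (Sum.inl k) := by
    intro k hk
    have : k ∈ G.deo (Sum.inr l) := Or.inl (Relation.TransGen.single hk)
    rw [hde] at this
    rcases this with h | h
    · right; exact h
    · left; exact (Sum.inl.inj h).symm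
  have hlj : (l, j) ∈ G.edgeL := by
    obtain ⟨c, hc, hcj⟩ := Relation.TransGen.head'_iff.mp hjl
    cases c with
    | inr m => exact hc.elim
    | inl k =>
      rcases Relation.reflTransGen_iff_eq_or_transGen.mp hcj with h | hcj
      · rw [Sum.inl.inj h]; exact hc
      · obtain ⟨b, hb, hkj⟩ := obs_lt G hcj
        have hbj : b = j := (Sum.inl.inj hb).symm
        subst hbj
        rcases hch k hc with rfl | h
        · exact (lt_irrefl _ hkj).elim
        · obtain ⟨b', hb', hjk⟩ := obs_lt G h
          have : b' = k := (Sum.inl.inj hb').symm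
          subst this
          exact absurd hkj (not_lt.mpr hjk.le)
  refine ⟨hlj, ?_, ?_⟩
  · intro k hk hkj
    rcases hch k hk with rfl | h
    · exact (hkj rfl).elim
    · exact h
  · intro f hinj hmono k hk hkj
    rcases hch k hk with rfl | h
    · exact (hkj rfl).elim
    · exact f_lt G hmono h
end
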